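/- arXiv:math/0512386 — 2 statements merged into one kernel-verified Lean document; each statement's English description precedes it below -/
import Mathlib

section
/- Let A be a nonempty finite set, let Q be a strictly positive stochastic matrix on A with stationary probability vector mu, let P be the stationary Markov measure determined by (Q, mu), and let Q~ be the time-reversed kernel Q~(x,y) = mu(y) Q(y,x) / mu(x). Then for every p in R the limit Lambda(p) := lim_{n->infinity} (1/n) log E_P [ prod_{i=0}^{n-1} ( Q(omega_i, omega_{i+1}) / Q~(omega_i, omega_{i+1}) )^p ] exists, is finite, and satisfies the fluctuation-theorem (Gallavotti-Cohen) symmetry Lambda(p) = Lambda(-1-p) for all p in R. -/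
/-!
Write `r = Q / Q~` and `Mₚ(x, y) = Q(x, y) r(x, y)^p`. The Markov property turns the moment
`E_P[∏ r^p]` into the path sum `μᵀ Mₚⁿ 𝟙`. Since `r(y, x) = r(x, y)⁻¹` and
`μ(x) Q(x, y) r(x, y)⁻¹ = μ(y) Q(y, x)`, the tilted matrices satisfy
`diag μ · M₋₁₋ₚ = Mₚᵀ · diag μ`, so the path sums for `p` and `-1 - p` already agree for every `n`.
The limit exists by Fekete's lemma: for a positive matrix, `n ↦ log (μᵀ Mⁿ 𝟙 / min μ)` is
subadditive and grows at least linearly.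
-/

open MeasureTheory Filter Finset Real Matrix Topology

theorem exists_tendsto_log_div_of_submultiplicative {E : ℕ → ℝ} {c δ : ℝ} (hc : 0 < c)
    (hδ : 0 < δ) (hlow : ∀ n, c * δ ^ n ≤ E n) (hmul : ∀ m n, c * E (m + n) ≤ E m * E n) :
    ∃ L, Tendsto (fun n : ℕ => log (E n) / n) atTop (𝓝 L) := by
  have hpos : ∀ n, 0 < E n / c := fun n =>
    div_pos ((mul_pos hc (pow_pos hδ n)).trans_le (hlow n)) hc
  set u : ℕ → ℝ := fun n => log (E n / c)
  have hsub : Subadditive u := by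
    intro m n
    rw [← log_mul (hpos m).ne' (hpos n).ne']
    refine log_le_log (hpos _) ?_
    rw [div_mul_div_comm, div_le_div_iff₀ hc (mul_pos hc hc)]
    nlinarith [hmul m n]
  have hbdd : BddBelow (Set.range fun n => u n / n) := by
    refine ⟨min (log δ) 0, ?_⟩
    rintro _ ⟨n, rfl⟩
    rcases n.eq_zero_or_pos with rfl | hn
    · simp
    have hlin : n * log δ ≤ u n := by
      rw [← log_pow]
      exact log_le_log (pow_pos hδ n) (by rw [le_div_iff₀ hc]; linarith [hlow n])
    exact (min_le_left _ _).trans (by rw [le_div_iff₀ (by positivity)]; linarith)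
  have hlim := (hsub.tendsto_lim hbdd).add (tendsto_const_div_atTop_nhds_zero_nat (log c))
  rw [add_zero] at hlim
  refine ⟨hsub.lim, hlim.congr fun n => ?_⟩
  rw [← add_div, ← log_mul (hpos n).ne' hc.ne', div_mul_cancel₀ _ hc.ne']

section MatrixPowers

variable {A : Type*} [Fintype A] [DecidableEq A]

theorem sum_prod_eq_dotProduct_pow_mulVec {R : Type*} [CommSemiring R] (M : Matrix A A R)
    (v w : A → R) (n : ℕ) :
    ∑ a : Fin (n + 1) → A,
        v (a 0) * (∏ i : Fin n, M (a i.castSucc) (a i.succ)) * w (a (Fin.last n))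
      = v ⬝ᵥ (M ^ n *ᵥ w) := by
  induction n generalizing v with
  | zero =>
    rw [← (Equiv.funUnique (Fin 1) A).symm.sum_comp]
    simp [dotProduct]
  | succ n ih =>
    rw [← (Fin.consEquiv fun _ => A).sum_comp, Fintype.sum_prod_type, pow_succ', ← mulVec_mulVec,
      dotProduct]
    refine Finset.sum_congr rfl fun x _ => ?_
    rw [show (M *ᵥ (M ^ n *ᵥ w)) x = M x ⬝ᵥ (M ^ n *ᵥ w) from rfl, ← ih (M x), Finset.mul_sum]
    refine Finset.sum_congr rfl fun b _ => ?_
    simp [Fin.consEquiv, Fin.prod_univ_succ]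
    ring

theorem dotProduct_pow_mulVec_one_eq_of_reversal {R : Type*} [CommSemiring R] {M M' : Matrix A A R}
    {μ : A → R} (h : ∀ x y, μ x * M' x y = M y x * μ y) (n : ℕ) :
    μ ⬝ᵥ (M' ^ n *ᵥ 1) = μ ⬝ᵥ (M ^ n *ᵥ 1) := by
  have hD : SemiconjBy (diagonal μ) M' Mᵀ := by
    ext x y
    simp [h]
  have hμ : diagonal μ *ᵥ 1 = μ := by
    ext x
    simp [mulVec_diagonal]
  calc μ ⬝ᵥ (M' ^ n *ᵥ 1) = 1 ⬝ᵥ ((diagonal μ * M' ^ n) *ᵥ 1) := by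
        simp [← mulVec_mulVec, mulVec_diagonal, dotProduct]
    _ = 1 ⬝ᵥ ((Mᵀ ^ n * diagonal μ) *ᵥ 1) := by rw [(hD.pow_right n).eq]
    _ = μ ⬝ᵥ (M ^ n *ᵥ 1) := by
        rw [← mulVec_mulVec, hμ, ← transpose_pow, mulVec_transpose, dotProduct_comm,
          ← dotProduct_mulVec]

variable {M : Matrix A A ℝ}

theorem le_pow_mulVec_one (hM : ∀ x y, 0 ≤ M x y) {δ : ℝ} (hδ : 0 ≤ δ)
    (hrow : ∀ x, δ ≤ (M *ᵥ 1) x) (n : ℕ) (x : A) : δ ^ n ≤ (M ^ n *ᵥ 1) x := by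
  induction n generalizing x with
  | zero => simp
  | succ n ih =>
    rw [pow_succ' M, ← mulVec_mulVec, pow_succ]
    calc δ ^ n * δ ≤ δ ^ n * (M *ᵥ 1) x := mul_le_mul_of_nonneg_left (hrow x) (pow_nonneg hδ n)
      _ = M x ⬝ᵥ (δ ^ n • 1) := by rw [dotProduct_smul, smul_eq_mul]; rfl
      _ ≤ (M *ᵥ (M ^ n *ᵥ 1)) x :=
        dotProduct_le_dotProduct_of_nonneg_left (fun y => by simpa using ih y) (hM x)

theorem mul_dotProduct_pow_add_mulVec_one_le (hM : ∀ x y, 0 ≤ M x y) {μ : A → ℝ} {c : ℝ}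
    (hc : 0 ≤ c) (hμ : ∀ x, c ≤ μ x) (m n : ℕ) :
    c * (μ ⬝ᵥ (M ^ (m + n) *ᵥ 1)) ≤ (μ ⬝ᵥ (M ^ m *ᵥ 1)) * (μ ⬝ᵥ (M ^ n *ᵥ 1)) := by
  set v := M ^ n *ᵥ 1
  set w := μ ᵥ* M ^ m
  have hv : 0 ≤ v := fun x =>
    dotProduct_nonneg_of_nonneg (fun y => pow_apply_nonneg hM n x y) zero_le_one
  have hw : 0 ≤ w := fun x =>
    dotProduct_nonneg_of_nonneg (fun y => hc.trans (hμ y)) (fun y => pow_apply_nonneg hM m y x)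
  have hsum : c * ∑ y, v y ≤ μ ⬝ᵥ v := by
    rw [Finset.mul_sum]
    exact Finset.sum_le_sum fun y _ => mul_le_mul_of_nonneg_right (hμ y) (hv y)
  have hmax : w ⬝ᵥ v ≤ (∑ y, v y) * (w ⬝ᵥ 1) := by
    rw [← smul_eq_mul, ← dotProduct_smul]
    refine dotProduct_le_dotProduct_of_nonneg_left (fun x => ?_) hw
    simpa using Finset.single_le_sum (fun y _ => hv y) (mem_univ x)
  rw [pow_add, ← mulVec_mulVec, dotProduct_mulVec, dotProduct_mulVec μ (M ^ m)]
  calc c * (w ⬝ᵥ v) ≤ c * (∑ y, v y) * (w ⬝ᵥ 1) := by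
        rw [mul_assoc]; exact mul_le_mul_of_nonneg_left hmax hc
    _ ≤ (w ⬝ᵥ 1) * (μ ⬝ᵥ v) := by
        rw [mul_comm]
        exact mul_le_mul_of_nonneg_left hsum (dotProduct_nonneg_of_nonneg hw zero_le_one)

theorem exists_tendsto_log_dotProduct_pow_mulVec_one_div [Nonempty A] (hM : ∀ x y, 0 < M x y)
    {μ : A → ℝ} (hμ : ∀ x, 0 < μ x) :
    ∃ L, Tendsto (fun n : ℕ => log (μ ⬝ᵥ (M ^ n *ᵥ 1)) / n) atTop (𝓝 L) := by
  have hM₀ : ∀ x y, 0 ≤ M x y := fun x y => (hM x y).le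
  have hrow : ∀ x, 0 < (M *ᵥ 1) x := fun x =>
    Finset.sum_pos (fun y _ => by simpa using hM x y) univ_nonempty
  obtain ⟨x₀, -, hμmin⟩ := Finset.exists_min_image univ μ univ_nonempty
  obtain ⟨x₁, -, hrowmin⟩ := Finset.exists_min_image univ (M *ᵥ 1) univ_nonempty
  refine exists_tendsto_log_div_of_submultiplicative (hμ x₀) (hrow x₁) (fun n => ?_)
    (mul_dotProduct_pow_add_mulVec_one_le hM₀ (hμ x₀).le fun x => hμmin x (mem_univ x))
  calc μ x₀ * (M *ᵥ 1) x₁ ^ n ≤ μ x₀ * (M ^ n *ᵥ 1) x₀ :=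
        mul_le_mul_of_nonneg_left
          (le_pow_mulVec_one hM₀ (hrow x₁).le (fun x => hrowmin x (mem_univ x)) n x₀) (hμ x₀).le
    _ ≤ μ ⬝ᵥ (M ^ n *ᵥ 1) :=
        Finset.single_le_sum (f := fun x => μ x * (M ^ n *ᵥ 1) x)
          (fun x _ => mul_nonneg (hμ x).le
            (dotProduct_nonneg_of_nonneg (fun y => pow_apply_nonneg hM₀ n x y) zero_le_one))
          (mem_univ x₀)

end MatrixPowers

open Fin.NatCast in
theorem integral_prod_eq_dotProduct_pow_mulVec {A : Type*} [Fintype A] [DecidableEq A]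
    [MeasurableSpace A] [MeasurableSingletonClass A] (μ : A → ℝ) (Q : A → A → ℝ)
    (P : Measure (ℕ → A)) [IsFiniteMeasure P]
    (hP : ∀ (n : ℕ) (a : ℕ → A),
      (P {ω | ∀ i ≤ n, ω i = a i}).toReal = μ (a 0) * ∏ i ∈ range n, Q (a i) (a (i + 1)))
    (f : A → A → ℝ) (n : ℕ) :
    ∫ ω, ∏ i ∈ range n, f (ω i) (ω (i + 1)) ∂P
      = μ ⬝ᵥ ((Matrix.of fun x y => Q x y * f x y) ^ n *ᵥ 1) := by
  set r : (ℕ → A) → (Fin (n + 1) → A) := fun ω i => ω i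
  have hr : Measurable r := measurable_pi_lambda _ fun i => measurable_pi_apply _
  set g : (Fin (n + 1) → A) → ℝ := fun a => ∏ i : Fin n, f (a i.castSucc) (a i.succ)
  have hcyl : ∀ a, P.real (r ⁻¹' {a}) = μ (a 0) * ∏ i : Fin n, Q (a i.castSucc) (a i.succ) := by
    intro a
    have hpre : r ⁻¹' {a} = {ω | ∀ i ≤ n, ω i = a i} := by
      ext ω
      simp only [r, Set.mem_preimage, Set.mem_singleton_iff, funext_iff, Fin.forall_iff,
        Set.mem_ofPred_eq]
      refine forall_congr' fun i => ⟨fun h hi => ?_, fun h hi => ?_⟩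
      · rw [h (Nat.lt_succ_of_le hi), Fin.natCast_eq_mk]
      · rw [h (Nat.le_of_lt_succ hi), Fin.natCast_eq_mk]
    rw [measureReal_def, hpre, hP n (fun j => a j), ← Fin.prod_univ_eq_prod_range]
    simp
  calc ∫ ω, ∏ i ∈ range n, f (ω i) (ω (i + 1)) ∂P = ∫ ω, g (r ω) ∂P := by
        simp [g, r, ← Fin.prod_univ_eq_prod_range]
    _ = ∑ a, (P.map r).real {a} • g a := by
        rw [← integral_map hr.aemeasurable (measurable_of_finite g).aestronglyMeasurable,
          integral_fintype Integrable.of_finite]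
    _ = ∑ a : Fin (n + 1) → A, μ (a 0) *
          (∏ i : Fin n, Q (a i.castSucc) (a i.succ) * f (a i.castSucc) (a i.succ)) *
          (1 : A → ℝ) (a (Fin.last n)) := by
        refine Finset.sum_congr rfl fun a _ => ?_
        rw [map_measureReal_apply hr (measurableSet_singleton a), hcyl, smul_eq_mul,
          Finset.prod_mul_distrib, Pi.one_apply, mul_one, mul_assoc]
    _ = _ := sum_prod_eq_dotProduct_pow_mulVec (Matrix.of fun x y => Q x y * f x y) μ 1 n

theorem pos_of_stationary {A : Type*} [Fintype A] {Q : A → A → ℝ} {μ : A → ℝ}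
    (hQ : ∀ x y, 0 < Q x y) (hμ₀ : ∀ x, 0 ≤ μ x) (hμ : μ ≠ 0)
    (hstat : ∀ y, ∑ x, μ x * Q x y = μ y) (y : A) : 0 < μ y := by
  obtain ⟨x, hx⟩ := Function.ne_iff.mp hμ
  rw [← hstat y]
  exact Finset.sum_pos' (fun x _ => mul_nonneg (hμ₀ x) (hQ x y).le)
    ⟨x, mem_univ x, mul_pos ((hμ₀ x).lt_of_ne' hx) (hQ x y)⟩

section TiltedMatrix

variable {A : Type*} {Q Qrev : A → A → ℝ} {μ : A → ℝ}

noncomputable def tiltedMatrix (Q Qrev : A → A → ℝ) (p : ℝ) : Matrix A A ℝ :=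
  Matrix.of fun x y => Q x y * (Q x y / Qrev x y) ^ p

theorem tiltedMatrix_pos (hQ : ∀ x y, 0 < Q x y) (hQrev : ∀ x y, 0 < Qrev x y) (p : ℝ)
    (x y : A) : 0 < tiltedMatrix Q Qrev p x y :=
  mul_pos (hQ x y) (rpow_pos_of_pos (div_pos (hQ x y) (hQrev x y)) p)

theorem mul_tiltedMatrix_neg_one_sub (hQ : ∀ x y, 0 < Q x y) (hμ : ∀ x, 0 < μ x)
    (hQrev : ∀ x y, Qrev x y = μ y * Q y x / μ x) (p : ℝ) (x y : A) :
    μ x * tiltedMatrix Q Qrev (-1 - p) x y = tiltedMatrix Q Qrev p y x * μ y := by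
  have hr : 0 < Q x y / Qrev x y := by
    rw [hQrev]
    exact div_pos (hQ x y) (div_pos (mul_pos (hμ y) (hQ y x)) (hμ x))
  have hinv : Q y x / Qrev y x = (Q x y / Qrev x y)⁻¹ := by
    rw [hQrev, hQrev]
    field_simp [(hμ x).ne', (hμ y).ne', (hQ x y).ne', (hQ y x).ne']
  have hbalance : μ x * Q x y * (Q x y / Qrev x y)⁻¹ = μ y * Q y x := by
    rw [hQrev]
    field_simp [(hμ x).ne', (hQ x y).ne']
  have hpow : (Q x y / Qrev x y) ^ (-1 - p) = (Q x y / Qrev x y)⁻¹ * (Q y x / Qrev y x) ^ p := by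
    rw [hinv, sub_eq_add_neg, rpow_add hr, rpow_neg_one, rpow_neg hr.le, inv_rpow hr.le]
  simp only [tiltedMatrix, of_apply]
  rw [hpow]
  linear_combination (Q y x / Qrev y x) ^ p * hbalance

end TiltedMatrix

theorem stmt13_general
    {A : Type*} [Fintype A] [Nonempty A] [MeasurableSpace A] [MeasurableSingletonClass A]
    (Q : A → A → ℝ) (μ : A → ℝ)
    (hQpos : ∀ x y, 0 < Q x y)
    (hμnonneg : ∀ x, 0 ≤ μ x) (hμsum : ∑ x, μ x = 1)
    (hμstat : ∀ y, ∑ x, μ x * Q x y = μ y)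
    (P : Measure (ℕ → A)) [IsProbabilityMeasure P]
    (hP : ∀ (n : ℕ) (a : ℕ → A),
      (P {ω | ∀ i ≤ n, ω i = a i}).toReal
        = μ (a 0) * ∏ i ∈ Finset.range n, Q (a i) (a (i + 1)))
    -- the time-reversed kernel
    (Qrev : A → A → ℝ)
    (hQrev : ∀ x y, Qrev x y = μ y * Q y x / μ x) :
    ∃ Lam : ℝ → ℝ,
      (∀ p : ℝ,
        Tendsto (fun n : ℕ =>
            Real.log (∫ ω, (∏ i ∈ Finset.range n,
                (Q (ω i) (ω (i + 1)) / Qrev (ω i) (ω (i + 1)))) ^ p ∂P) / n)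
          atTop (nhds (Lam p))) ∧
      ∀ p : ℝ, Lam p = Lam (-1 - p) := by
  classical
  have hμpos : ∀ x, 0 < μ x :=
    pos_of_stationary hQpos hμnonneg (by rintro rfl; simp at hμsum) hμstat
  have hQrevpos : ∀ x y, 0 < Qrev x y := fun x y => by
    rw [hQrev]
    exact div_pos (mul_pos (hμpos y) (hQpos y x)) (hμpos x)
  have hmoment : ∀ (p : ℝ) (n : ℕ),
      ∫ ω, (∏ i ∈ range n, (Q (ω i) (ω (i + 1)) / Qrev (ω i) (ω (i + 1)))) ^ p ∂P
        = μ ⬝ᵥ (tiltedMatrix Q Qrev p ^ n *ᵥ 1) := fun p n => by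
    simp_rw [← Real.finsetProd_rpow _ _ fun i _ => (div_pos (hQpos _ _) (hQrevpos _ _)).le]
    exact integral_prod_eq_dotProduct_pow_mulVec μ Q P hP (fun x y => (Q x y / Qrev x y) ^ p) n
  refine ⟨fun p => limUnder atTop fun n : ℕ => log (μ ⬝ᵥ (tiltedMatrix Q Qrev p ^ n *ᵥ 1)) / n,
    fun p => ?_, fun p => ?_⟩
  · simp only [hmoment]
    exact tendsto_nhds_limUnder
      (exists_tendsto_log_dotProduct_pow_mulVec_one_div (tiltedMatrix_pos hQpos hQrevpos p) hμpos)
  · simp only [dotProduct_pow_mulVec_one_eq_of_reversal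
      (mul_tiltedMatrix_neg_one_sub hQpos hμpos hQrev p)]

/-- Gallavotti–Cohen fluctuation-theorem symmetry for the entropy production of a stationary
Markov chain: the scaled cumulant generating function `Λ` of
`∑_{i<n} log (Q(ω_i,ω_{i+1}) / Q~(ω_i,ω_{i+1}))`, where `Q~(x,y) = μ(y) Q(y,x) / μ(x)` is the
time-reversed kernel, exists, is finite, and satisfies `Λ(p) = Λ(-1-p)`. -/
theorem stmt13
    {A : Type*} [Fintype A] [Nonempty A] [MeasurableSpace A] [MeasurableSingletonClass A]
    (Q : A → A → ℝ) (μ : A → ℝ)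
    (hQpos : ∀ x y, 0 < Q x y)
    (hQrow : ∀ x, ∑ y, Q x y = 1)
    (hμnonneg : ∀ x, 0 ≤ μ x) (hμsum : ∑ x, μ x = 1)
    (hμstat : ∀ y, ∑ x, μ x * Q x y = μ y)
    (P : Measure (ℕ → A)) [IsProbabilityMeasure P]
    (hP : ∀ (n : ℕ) (a : ℕ → A),
      (P {ω | ∀ i ≤ n, ω i = a i}).toReal
        = μ (a 0) * ∏ i ∈ Finset.range n, Q (a i) (a (i + 1)))
    -- the time-reversed kernel
    (Qrev : A → A → ℝ)
    (hQrev : ∀ x y, Qrev x y = μ y * Q y x / μ x) :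
    ∃ Lam : ℝ → ℝ,
      (∀ p : ℝ,
        Tendsto (fun n : ℕ =>
            Real.log (∫ ω, (∏ i ∈ Finset.range n,
                (Q (ω i) (ω (i + 1)) / Qrev (ω i) (ω (i + 1)))) ^ p ∂P) / n)
          atTop (nhds (Lam p))) ∧
      ∀ p : ℝ, Lam p = Lam (-1 - p) :=
  stmt13_general Q μ hQpos hμnonneg hμsum hμstat P hP Qrev hQrev
end

section
/- Let A be a nonempty finite set, let Q be a strictly positive stochastic matrix on A with stationary probability vector mu, and let P be the stationary Markov measure determined by (Q, mu). Then there exist kappa_1, kappa_2 > 0 such that for every sequence g in A^N, for P-almost every omega, for all sufficiently large n: - kappa_1 log n <= log( T_n(g | omega) * P_n(g_1,...,g_n) ) <= log( kappa_2 log n ), where T_n(g | omega) = inf{ k >= 0 : omega_{k+i} = g_i for all 1 <= i <= n } and P_n(g_1,...,g_n) = P{ omega' : omega'_i = g_i for 1 <= i <= n }. -/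
open MeasureTheory Filter Finset Real

/-- Probability of the cylinder determined by the word `a_1, …, a_n` (coordinates `1 ≤ i ≤ n`). -/
noncomputable def cylProb {A : Type*} [MeasurableSpace A]
    (P : Measure (ℕ → A)) (n : ℕ) (a : ℕ → A) : ℝ :=
  (P {ω | ∀ i, 1 ≤ i → i ≤ n → ω i = a i}).toReal

/-- Hitting time of the first `n` symbols of a fixed target sequence `g`:
`T_n(g|ω) = inf { k ≥ 0 : ω_{k+i} = g_i for all 1 ≤ i ≤ n }`. -/
noncomputable def hitTime {A : Type*} (n : ℕ) (g ω : ℕ → A) : ℕ :=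
  sInf {k | ∀ i, 1 ≤ i → i ≤ n → ω (k + i) = g i}


open MeasureTheory Filter Finset Real

namespace Stmt15Aux

set_option linter.unusedSectionVars false

variable {A : Type*} [Fintype A] [Nonempty A]

/-- clamp a sequence at index `m`. -/
def clampF (m : ℕ) (a : ℕ → A) : ℕ → A := fun i => a (min i m)

def consW (x : A) (a : ℕ → A) : ℕ → A := fun i => match i with
  | 0 => x
  | j+1 => a j

def shiftW (a : ℕ → A) : ℕ → A := fun i => a (i+1)

def shiftK (k : ℕ) (a : ℕ → A) : ℕ → A := fun i => a (k+i)

def glueW (s : ℕ) (u w : ℕ → A) : ℕ → A := fun i => if i < s then u i else w (i - s)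

@[simp] lemma consW_zero (x : A) (a : ℕ → A) : consW x a 0 = x := rfl
@[simp] lemma consW_succ (x : A) (a : ℕ → A) (j : ℕ) : consW x a (j+1) = a j := rfl
@[simp] lemma shiftW_consW (x : A) (a : ℕ → A) : shiftW (consW x a) = a := rfl

lemma consW_shiftW (a : ℕ → A) : consW (a 0) (shiftW a) = a := by
  funext i; cases i <;> rfl

lemma glueW_one (u w : ℕ → A) : glueW 1 u w = consW (u 0) w := by
  funext i; cases i with
  | zero => simp [glueW]
  | succ j => simp [glueW]

lemma glueW_cons (s : ℕ) (y : A) (u w : ℕ → A) :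
    glueW (s+1) (consW y u) w = consW y (glueW s u w) := by
  funext i; cases i with
  | zero => simp [glueW]
  | succ j =>
      simp only [glueW, consW_succ]
      by_cases h : j < s
      · simp [h, Nat.succ_lt_succ h]
      · have h2 : ¬ (j+1 < s+1) := by omega
        simp [h, h2]

noncomputable def WS (A : Type*) [Fintype A] (m : ℕ) : Finset (ℕ → A) := by
  classical
  exact (Finset.univ : Finset (Fin (m+1) → A)).image (fun v i => v ⟨min i m, by omega⟩)

lemma mem_WS {m : ℕ} {a : ℕ → A} : a ∈ WS A m ↔ ∀ i, m ≤ i → a i = a m := by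
  classical
  unfold WS
  simp only [Finset.mem_image, Finset.mem_univ, true_and]
  constructor
  · rintro ⟨v, rfl⟩ i hi
    simp [Nat.min_eq_right hi]
  · intro h
    refine ⟨fun j => a j, ?_⟩
    funext i
    rcases le_or_gt i m with hi | hi
    · simp [Nat.min_eq_left hi]
    · simp only [Nat.min_eq_right hi.le]
      exact (h i hi.le).symm

lemma clampF_mem_WS (m : ℕ) (ω : ℕ → A) : clampF m ω ∈ WS A m := by
  rw [mem_WS]
  intro i hi
  simp [clampF, Nat.min_eq_right hi]

lemma clampF_eq_of_le {m i : ℕ} (h : i ≤ m) (ω : ℕ → A) : clampF m ω i = ω i := by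
  simp [clampF, Nat.min_eq_left h]

lemma clampF_eq_self_of_mem {m : ℕ} {a : ℕ → A} (ha : a ∈ WS A m) : clampF m a = a := by
  rw [mem_WS] at ha
  funext i
  rcases le_or_gt i m with hi | hi
  · simp [clampF, Nat.min_eq_left hi]
  · simp only [clampF, Nat.min_eq_right hi.le]
    exact (ha i hi.le).symm

lemma eq_of_agree_le {m : ℕ} {a b : ℕ → A} (ha : a ∈ WS A m) (hb : b ∈ WS A m)
    (h : ∀ i ≤ m, a i = b i) : a = b := by
  rw [mem_WS] at ha hb
  funext i
  rcases le_or_gt i m with hi | hi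
  · exact h i hi
  · rw [ha i hi.le, hb i hi.le]; exact h m le_rfl

lemma sum_WS_zero (f : (ℕ → A) → ℝ) : ∑ a ∈ WS A 0, f a = ∑ x : A, f (fun _ => x) := by
  classical
  unfold WS
  rw [Finset.sum_image]
  · refine Fintype.sum_equiv (Equiv.funUnique (Fin 1) A) _ _ ?_
    intro v
    congr 1
    funext i
    simp [Equiv.funUnique]
  · intro v _ v' _ h
    funext i
    have h0 := congrFun h 0
    simp only [Nat.min_self] at h0
    have hi0 : i = ⟨0, by omega⟩ := by
      ext; omega
    rw [hi0]
    convert h0 using 2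

lemma shiftW_mem_WS {m : ℕ} {a : ℕ → A} (ha : a ∈ WS A (m+1)) : shiftW a ∈ WS A m := by
  rw [mem_WS] at ha ⊢
  intro i hi
  simp only [shiftW]
  rw [ha (i+1) (by omega), ha (m+1) le_rfl]

lemma consW_mem_WS {m : ℕ} {x : A} {b : ℕ → A} (hb : b ∈ WS A m) : consW x b ∈ WS A (m+1) := by
  rw [mem_WS] at hb ⊢
  intro i hi
  obtain ⟨j, rfl⟩ : ∃ j, i = j + 1 := ⟨i - 1, by omega⟩
  simp only [consW_succ]
  exact hb j (by omega)

lemma sum_WS_succ (m : ℕ) (f : (ℕ → A) → ℝ) :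
    ∑ a ∈ WS A (m+1), f a = ∑ x : A, ∑ b ∈ WS A m, f (consW x b) := by
  classical
  rw [← Finset.sum_product']
  refine Finset.sum_nbij' (i := fun a => (a 0, shiftW a)) (j := fun p => consW p.1 p.2)
    ?_ ?_ ?_ ?_ ?_
  · intro a ha
    simp only [Finset.mem_product, Finset.mem_univ, true_and]
    exact shiftW_mem_WS ha
  · intro p hp
    simp only [Finset.mem_product] at hp
    exact consW_mem_WS hp.2
  · intro a _; exact consW_shiftW a
  · intro p _; rfl
  · intro a _; rw [consW_shiftW]

end Stmt15Aux

namespace Stmt15Aux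

variable {A : Type*} [Fintype A] [Nonempty A]
set_option linter.unusedSectionVars false

/-- real-valued indicator of a proposition. -/
noncomputable def ind (p : Prop) : ℝ := @ite ℝ p (Classical.propDecidable p) 1 0

@[simp] lemma ind_pos {p : Prop} (h : p) : ind p = 1 := by unfold ind; exact if_pos h
@[simp] lemma ind_neg {p : Prop} (h : ¬ p) : ind p = 0 := by unfold ind; exact if_neg h
lemma ind_nonneg (p : Prop) : 0 ≤ ind p := by
  by_cases h : p
  · rw [ind_pos h]; norm_num
  · rw [ind_neg h]
lemma ind_le_one (p : Prop) : ind p ≤ 1 := by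
  by_cases h : p
  · rw [ind_pos h]
  · rw [ind_neg h]; norm_num
lemma ind_congr {p q : Prop} (h : p ↔ q) : ind p = ind q := by
  by_cases hp : p
  · rw [ind_pos hp, ind_pos (h.mp hp)]
  · rw [ind_neg hp, ind_neg (fun hq => hp (h.mpr hq))]
lemma ind_and (p q : Prop) : ind (p ∧ q) = ind p * ind q := by
  by_cases hp : p <;> by_cases hq : q <;>
    simp [ind_pos, ind_neg, hp, hq]
lemma ind_not (p : Prop) : ind (¬ p) = 1 - ind p := by
  by_cases hp : p <;> simp [ind_pos, ind_neg, hp]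

/-- word probability: `μ (a 0) * ∏ Q (a i) (a (i+1))`. -/
noncomputable def wpr (Q : A → A → ℝ) (μ : A → ℝ) (m : ℕ) (a : ℕ → A) : ℝ :=
  μ (a 0) * ∏ i ∈ Finset.range m, Q (a i) (a (i+1))

/-- transition product started at `x` through the word `a` (length `m`). -/
noncomputable def tpr (Q : A → A → ℝ) (x : A) (m : ℕ) (a : ℕ → A) : ℝ :=
  ∏ i ∈ Finset.range m, Q (consW x a i) (consW x a (i+1))

lemma tpr_one (Q : A → A → ℝ) (x : A) (a : ℕ → A) : tpr Q x 1 a = Q x (a 0) := by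
  simp [tpr]

lemma tpr_eq (Q : A → A → ℝ) (x : A) (m : ℕ) (a : ℕ → A) :
    tpr Q x (m+1) a = Q x (a 0) * ∏ i ∈ Finset.range m, Q (a i) (a (i+1)) := by
  unfold tpr
  rw [Finset.prod_range_succ']
  simp only [consW_succ, consW_zero]
  ring

lemma tpr_succ (Q : A → A → ℝ) (x : A) (m : ℕ) (a : ℕ → A) :
    tpr Q x (m+1) a = Q x (a 0) * tpr Q (a 0) m (shiftW a) := by
  rw [tpr_eq]
  congr 1
  unfold tpr
  refine Finset.prod_congr rfl ?_
  intro i _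
  rw [← consW_shiftW a]
  simp only [shiftW_consW]
  congr 1

lemma wpr_consW (Q : A → A → ℝ) (μ : A → ℝ) (m : ℕ) (x : A) (b : ℕ → A) :
    wpr Q μ (m+1) (consW x b) = μ x * tpr Q x (m+1) b := rfl

lemma wpr_eq_tpr (Q : A → A → ℝ) (μ : A → ℝ) (m : ℕ) (a : ℕ → A) :
    wpr Q μ m a = μ (a 0) * tpr Q (a 0) m (shiftW a) := by
  conv_lhs => rw [← consW_shiftW a]
  cases m with
  | zero => simp [wpr, tpr]
  | succ m => rw [wpr_consW]

lemma tpr_nonneg {Q : A → A → ℝ} (hQ : ∀ x y, 0 ≤ Q x y) (x : A) (m : ℕ) (a : ℕ → A) :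
    0 ≤ tpr Q x m a :=
  Finset.prod_nonneg (fun _ _ => hQ _ _)

lemma wpr_nonneg {Q : A → A → ℝ} {μ : A → ℝ} (hQ : ∀ x y, 0 ≤ Q x y) (hμ : ∀ x, 0 ≤ μ x)
    (m : ℕ) (a : ℕ → A) : 0 ≤ wpr Q μ m a :=
  mul_nonneg (hμ _) (Finset.prod_nonneg (fun _ _ => hQ _ _))

lemma tpr_sum {Q : A → A → ℝ} (hQrow : ∀ x, ∑ y, Q x y = 1) (m : ℕ) (x : A) :
    ∑ a ∈ WS A m, tpr Q x (m+1) a = 1 := by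
  induction m generalizing x with
  | zero =>
      rw [sum_WS_zero]
      calc ∑ y : A, tpr Q x 1 (fun _ => y)
          = ∑ y : A, Q x y := Finset.sum_congr rfl (fun y _ => tpr_one Q x _)
        _ = 1 := hQrow x
  | succ m ih =>
      rw [sum_WS_succ]
      have : ∀ y : A, ∑ b ∈ WS A m, tpr Q x (m+2) (consW y b) = Q x y := by
        intro y
        have h1 : ∀ b : ℕ → A, tpr Q x (m+2) (consW y b) = Q x y * tpr Q y (m+1) b := by
          intro b
          rw [tpr_succ]
          simp
        rw [Finset.sum_congr rfl (fun b _ => h1 b), ← Finset.mul_sum, ih y, mul_one]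
      rw [Finset.sum_congr rfl (fun y _ => this y)]
      exact hQrow x

lemma sum_split {Q : A → A → ℝ} (s t : ℕ) (x : A) (f : (ℕ → A) → ℝ) :
    ∑ c ∈ WS A (s+t+1), tpr Q x (s+t+2) c * f c
      = ∑ u ∈ WS A s, tpr Q x (s+1) u *
          ∑ w ∈ WS A t, tpr Q (u s) (t+1) w * f (glueW (s+1) u w) := by
  induction s generalizing x f with
  | zero =>
      simp only [Nat.zero_add]
      calc ∑ c ∈ WS A (t+1), tpr Q x (t+2) c * f c
          = ∑ y : A, ∑ w ∈ WS A t, tpr Q x (t+2) (consW y w) * f (consW y w) :=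
            sum_WS_succ t (fun c => tpr Q x (t+2) c * f c)
        _ = ∑ y : A, ∑ w ∈ WS A t, Q x y * (tpr Q y (t+1) w * f (consW y w)) := by
            refine Finset.sum_congr rfl fun y _ => Finset.sum_congr rfl fun w _ => ?_
            rw [tpr_succ]
            simp only [consW_zero, shiftW_consW]
            ring
        _ = ∑ u ∈ WS A 0, tpr Q x 1 u *
              ∑ w ∈ WS A t, tpr Q (u 0) (t+1) w * f (glueW 1 u w) := by
            rw [sum_WS_zero (fun u => tpr Q x 1 u *
              ∑ w ∈ WS A t, tpr Q (u 0) (t+1) w * f (glueW 1 u w))]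
            refine Finset.sum_congr rfl fun y _ => ?_
            rw [← Finset.mul_sum, tpr_one]
            refine congrArg (fun z => Q x y * z) ?_
            refine Finset.sum_congr rfl fun w _ => ?_
            rw [glueW_one]
  | succ s ih =>
      have e1 : s + 1 + t + 1 = (s + t + 1) + 1 := by omega
      have e2 : s + 1 + t + 2 = (s + t + 2) + 1 := by omega
      calc ∑ c ∈ WS A (s+1+t+1), tpr Q x (s+1+t+2) c * f c
          = ∑ c ∈ WS A ((s+t+1)+1), tpr Q x ((s+t+2)+1) c * f c := by rw [e1, e2]
        _ = ∑ y : A, ∑ c ∈ WS A (s+t+1), tpr Q x ((s+t+2)+1) (consW y c) * f (consW y c) :=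
            sum_WS_succ (s+t+1) (fun c => tpr Q x ((s+t+2)+1) c * f c)
        _ = ∑ y : A, Q x y * ∑ c ∈ WS A (s+t+1), tpr Q y (s+t+2) c * f (consW y c) := by
            refine Finset.sum_congr rfl fun y _ => ?_
            rw [Finset.mul_sum]
            refine Finset.sum_congr rfl fun c _ => ?_
            rw [tpr_succ]
            simp only [consW_zero, shiftW_consW]
            ring
        _ = ∑ y : A, Q x y * ∑ u ∈ WS A s, tpr Q y (s+1) u *
              ∑ w ∈ WS A t, tpr Q (u s) (t+1) w * f (consW y (glueW (s+1) u w)) := by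
            refine Finset.sum_congr rfl fun y _ => ?_
            rw [ih y (fun c => f (consW y c))]
        _ = ∑ y : A, ∑ u ∈ WS A s, tpr Q x (s+2) (consW y u) *
              ∑ w ∈ WS A t, tpr Q ((consW y u) (s+1)) (t+1) w * f (glueW (s+2) (consW y u) w) := by
            refine Finset.sum_congr rfl fun y _ => ?_
            rw [Finset.mul_sum]
            refine Finset.sum_congr rfl fun u _ => ?_
            have h1 : tpr Q x (s+2) (consW y u) = Q x y * tpr Q y (s+1) u := by
              rw [tpr_succ]; simp
            have h2 : (consW y u) (s+1) = u s := rfl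
            have h3 : ∀ w, glueW (s+2) (consW y u) w = consW y (glueW (s+1) u w) :=
              fun w => glueW_cons (s+1) y u w
            rw [h1, h2]
            simp only [h3]
            ring
        _ = ∑ u ∈ WS A (s+1), tpr Q x (s+2) u *
              ∑ w ∈ WS A t, tpr Q (u (s+1)) (t+1) w * f (glueW (s+2) u w) :=
            (sum_WS_succ s (fun u => tpr Q x (s+2) u *
              ∑ w ∈ WS A t, tpr Q (u (s+1)) (t+1) w * f (glueW (s+2) u w))).symm

end Stmt15Aux

namespace Stmt15Aux

set_option linter.unusedSectionVars false
open scoped Classical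
set_option maxHeartbeats 1000000

variable {A : Type*} [Fintype A] [Nonempty A] [MeasurableSpace A] [MeasurableSingletonClass A]
variable (Q : A → A → ℝ) (μ : A → ℝ) (P : Measure (ℕ → A)) [IsProbabilityMeasure P]

lemma shiftW_clampF (m : ℕ) (ω : ℕ → A) :
    shiftW (clampF (m+1) ω) = clampF m (shiftW ω) := by
  funext i
  simp only [shiftW, clampF]
  congr 1
  omega

lemma FDD
    (hP : ∀ (n : ℕ) (a : ℕ → A),
      (P {ω | ∀ i ≤ n, ω i = a i}).toReal
        = μ (a 0) * ∏ i ∈ Finset.range n, Q (a i) (a (i + 1)))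
    (m : ℕ) (pred : (ℕ → A) → Prop) :
    (P {ω | pred (clampF m ω)}).toReal
      = ∑ a ∈ WS A m, wpr Q μ m a * ind (pred a) := by
  classical
  set Cyl : (ℕ → A) → Set (ℕ → A) := fun a => {ω | ∀ i ≤ m, ω i = a i} with hCyl
  have hmeas : ∀ a : ℕ → A, MeasurableSet (Cyl a) := by
    intro a
    have : Cyl a = ⋂ (i : ℕ), ⋂ (_ : i ≤ m), ((fun ω : ℕ → A => ω i) ⁻¹' {a i}) := by
      ext ω; simp [hCyl]
    rw [this]
    exact MeasurableSet.iInter fun i => MeasurableSet.iInter fun _ =>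
      (measurable_pi_apply i) (measurableSet_singleton (a i))
  have hcover : {ω | pred (clampF m ω)} = ⋃ a ∈ (WS A m).filter pred, Cyl a := by
    ext ω
    simp only [Set.mem_setOf_eq, Set.mem_iUnion, Finset.mem_filter]
    constructor
    · intro h
      refine ⟨clampF m ω, ⟨⟨clampF_mem_WS m ω, h⟩, ?_⟩⟩
      intro i hi
      exact (clampF_eq_of_le hi ω).symm
    · rintro ⟨a, ⟨⟨haWS, hapred⟩, hω⟩⟩
      have : clampF m ω = a := by
        refine eq_of_agree_le (clampF_mem_WS m ω) haWS ?_
        intro i hi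
        rw [clampF_eq_of_le hi ω]
        exact hω i hi
      rw [this]; exact hapred
  have hdisj : (↑((WS A m).filter pred) : Set (ℕ → A)).PairwiseDisjoint Cyl := by
    intro a ha b hb hab
    simp only [Finset.coe_filter, Set.mem_setOf_eq] at ha hb
    refine Set.disjoint_left.mpr ?_
    intro ω hωa hωb
    exact hab (eq_of_agree_le ha.1 hb.1 (fun i hi => (hωa i hi).symm.trans (hωb i hi)))
  rw [hcover, measure_biUnion_finset hdisj (fun a _ => hmeas a),
    ENNReal.toReal_sum (fun a _ => measure_ne_top P _), Finset.sum_filter]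
  refine Finset.sum_congr rfl fun a _ => ?_
  by_cases h : pred a
  · rw [if_pos h, ind_pos h, mul_one]
    exact hP m a
  · rw [if_neg h, ind_neg h, mul_zero]

lemma I1 (hμstat : ∀ y, ∑ x, μ x * Q x y = μ y) (m : ℕ) (f : (ℕ → A) → ℝ) :
    ∑ a ∈ WS A (m+1), wpr Q μ (m+1) a * f (shiftW a)
      = ∑ b ∈ WS A m, wpr Q μ m b * f b := by
  rw [sum_WS_succ m (fun a => wpr Q μ (m+1) a * f (shiftW a)), Finset.sum_comm]
  refine Finset.sum_congr rfl fun b _ => ?_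
  calc ∑ x : A, wpr Q μ (m+1) (consW x b) * f (shiftW (consW x b))
      = ∑ x : A, (μ x * Q x (b 0)) * (tpr Q (b 0) m (shiftW b) * f b) := by
        refine Finset.sum_congr rfl fun x _ => ?_
        rw [shiftW_consW, wpr_consW, tpr_succ]
        ring
    _ = (∑ x : A, μ x * Q x (b 0)) * (tpr Q (b 0) m (shiftW b) * f b) := by
        rw [Finset.sum_mul]
    _ = wpr Q μ m b * f b := by rw [hμstat (b 0), wpr_eq_tpr]; ring

lemma STAT
    (hP : ∀ (n : ℕ) (a : ℕ → A),
      (P {ω | ∀ i ≤ n, ω i = a i}).toReal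
        = μ (a 0) * ∏ i ∈ Finset.range n, Q (a i) (a (i + 1)))
    (hμstat : ∀ y, ∑ x, μ x * Q x y = μ y)
    (k m : ℕ) (pred : (ℕ → A) → Prop) :
    (P {ω | pred (clampF m (shiftK k ω))}).toReal
      = (P {ω | pred (clampF m ω)}).toReal := by
  classical
  induction k with
  | zero =>
      have : ∀ ω : ℕ → A, shiftK 0 ω = ω := by
        intro ω; funext i; simp [shiftK]
      simp only [this]
  | succ k ih =>
      have hset : {ω : ℕ → A | pred (clampF m (shiftK (k+1) ω))}
          = {ω : ℕ → A | (fun a => pred (clampF m (shiftK (k+1) a))) (clampF (m+k+1) ω)} := by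
        ext ω
        simp only [Set.mem_setOf_eq]
        have : clampF m (shiftK (k+1) (clampF (m+k+1) ω)) = clampF m (shiftK (k+1) ω) := by
          funext i
          simp only [clampF, shiftK]
          congr 1
          omega
        rw [this]
      rw [hset, FDD Q μ P hP (m+k+1) (fun a => pred (clampF m (shiftK (k+1) a)))]
      have hkey : ∀ a : ℕ → A,
          wpr Q μ (m+k+1) a * ind (pred (clampF m (shiftK (k+1) a)))
            = wpr Q μ (m+k+1) a *
              ((fun b => ind (pred (clampF m (shiftK k b)))) (shiftW a)) := by
        intro a
        have hsk : shiftK (k+1) a = shiftK k (shiftW a) := by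
          funext i; simp only [shiftK, shiftW]; congr 1; omega
        rw [hsk]
      rw [Finset.sum_congr rfl (fun a _ => hkey a),
        I1 Q μ hμstat (m+k) (fun b => ind (pred (clampF m (shiftK k b)))),
        ← FDD Q μ P hP (m+k) (fun a => pred (clampF m (shiftK k a)))]
      have hset2 : {ω : ℕ → A | pred (clampF m (shiftK k (clampF (m+k) ω)))}
          = {ω : ℕ → A | pred (clampF m (shiftK k ω))} := by
        ext ω
        simp only [Set.mem_setOf_eq]
        have : clampF m (shiftK k (clampF (m+k) ω)) = clampF m (shiftK k ω) := by
          funext i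
          simp only [clampF, shiftK]
          congr 1
          omega
        rw [this]
      rw [hset2, ih]

end Stmt15Aux

namespace Stmt15Aux

set_option linter.unusedSectionVars false
open scoped Classical
set_option maxHeartbeats 1000000

variable {A : Type*} [Fintype A] [Nonempty A] [MeasurableSpace A] [MeasurableSingletonClass A]
variable (Q : A → A → ℝ) (μ : A → ℝ) (P : Measure (ℕ → A)) [IsProbabilityMeasure P]

lemma clampF_clampF (m : ℕ) (a : ℕ → A) : clampF m (clampF m a) = clampF m a := by
  funext i
  simp only [clampF]
  congr 1
  omega

/-- FDD in "peeled" form: probability of an event depending on coordinates `1,…,m+1`. -/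
lemma FDD'
    (hP : ∀ (n : ℕ) (a : ℕ → A),
      (P {ω | ∀ i ≤ n, ω i = a i}).toReal
        = μ (a 0) * ∏ i ∈ Finset.range n, Q (a i) (a (i + 1)))
    (m : ℕ) (pred : (ℕ → A) → Prop) :
    (P {ω | pred (clampF m (shiftW ω))}).toReal
      = ∑ x : A, μ x * ∑ c ∈ WS A m, tpr Q x (m+1) c * ind (pred c) := by
  have hset : {ω : ℕ → A | pred (clampF m (shiftW ω))}
      = {ω : ℕ → A | (fun a => pred (clampF m (shiftW a))) (clampF (m+1) ω)} := by
    ext ω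
    simp only [Set.mem_setOf_eq]
    rw [shiftW_clampF, clampF_clampF]
  rw [hset, FDD Q μ P hP (m+1) (fun a => pred (clampF m (shiftW a))),
    sum_WS_succ m (fun a => wpr Q μ (m+1) a * ind (pred (clampF m (shiftW a))))]
  refine Finset.sum_congr rfl fun x _ => ?_
  rw [Finset.mul_sum]
  refine Finset.sum_congr rfl fun b hb => ?_
  rw [shiftW_consW, clampF_eq_self_of_mem hb, wpr_consW]
  ring

/-- Probability of one prescribed window. -/
lemma winP
    (hP : ∀ (n : ℕ) (a : ℕ → A),
      (P {ω | ∀ i ≤ n, ω i = a i}).toReal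
        = μ (a 0) * ∏ i ∈ Finset.range n, Q (a i) (a (i + 1)))
    (hμstat : ∀ y, ∑ x, μ x * Q x y = μ y)
    (k len : ℕ) (hlen : 1 ≤ len) (u : ℕ → A) :
    (P {ω | ∀ i < len, ω (k+1+i) = u i}).toReal
      = μ (u 0) * ∏ i ∈ Finset.range (len-1), Q (u i) (u (i+1)) := by
  obtain ⟨l, rfl⟩ : ∃ l, len = l + 1 := ⟨len - 1, by omega⟩
  simp only [Nat.add_sub_cancel]
  have hset : {ω : ℕ → A | ∀ i < l+1, ω (k+1+i) = u i}
      = {ω : ℕ → A | (fun b => ∀ i < l+1, b (1+i) = u i) (clampF (l+1) (shiftK k ω))} := by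
    ext ω
    simp only [Set.mem_setOf_eq]
    refine forall_congr' fun i => imp_congr_right fun hi => ?_
    have h1 : clampF (l+1) (shiftK k ω) (1+i) = ω (k+1+i) := by
      simp only [clampF, shiftK]
      congr 1
      omega
    rw [h1]
  rw [hset, STAT Q μ P hP hμstat k (l+1) (fun b => ∀ i < l+1, b (1+i) = u i),
    FDD Q μ P hP (l+1) (fun b => ∀ i < l+1, b (1+i) = u i),
    sum_WS_succ l (fun a => wpr Q μ (l+1) a * ind (∀ i < l+1, a (1+i) = u i))]
  have hkey : ∀ x : A, ∀ b ∈ WS A l,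
      wpr Q μ (l+1) (consW x b) * ind (∀ i < l+1, consW x b (1+i) = u i)
        = (if b = clampF l u then μ x * tpr Q x (l+1) (clampF l u) else 0) := by
    intro x b hb
    have hcond : (∀ i < l+1, consW x b (1+i) = u i) ↔ b = clampF l u := by
      constructor
      · intro h
        refine eq_of_agree_le hb (clampF_mem_WS l u) ?_
        intro i hi
        rw [clampF_eq_of_le hi]
        have := h i (by omega)
        rw [show (1:ℕ)+i = i+1 from by omega] at this
        simpa using this
      · intro h i hi
        rw [show (1:ℕ)+i = i+1 from by omega]
        simp only [consW_succ, h]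
        exact clampF_eq_of_le (by omega) u
    rw [ind_congr hcond]
    by_cases h : b = clampF l u
    · rw [ind_pos h, if_pos h, mul_one, h, wpr_consW]
    · rw [ind_neg h, if_neg h, mul_zero]
  calc ∑ x : A, ∑ b ∈ WS A l,
        wpr Q μ (l+1) (consW x b) * ind (∀ i < l+1, consW x b (1+i) = u i)
      = ∑ x : A, ∑ b ∈ WS A l,
        (if b = clampF l u then μ x * tpr Q x (l+1) (clampF l u) else 0) :=
        Finset.sum_congr rfl fun x _ => Finset.sum_congr rfl fun b hb => hkey x b hb
    _ = ∑ x : A, μ x * tpr Q x (l+1) (clampF l u) := by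
        refine Finset.sum_congr rfl fun x _ => ?_
        rw [Finset.sum_ite_eq' (WS A l) (clampF l u)
          (fun _ => μ x * tpr Q x (l+1) (clampF l u)), if_pos (clampF_mem_WS l u)]
    _ = ∑ x : A, (μ x * Q x (u 0)) * ∏ i ∈ Finset.range l, Q (u i) (u (i+1)) := by
        refine Finset.sum_congr rfl fun x _ => ?_
        rw [tpr_eq]
        have h0 : clampF l u 0 = u 0 := clampF_eq_of_le (by omega) u
        have hprod : ∏ i ∈ Finset.range l, Q (clampF l u i) (clampF l u (i+1))
            = ∏ i ∈ Finset.range l, Q (u i) (u (i+1)) := by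
          refine Finset.prod_congr rfl fun i hi => ?_
          rw [Finset.mem_range] at hi
          rw [clampF_eq_of_le (by omega) u, clampF_eq_of_le (by omega) u]
        rw [h0, hprod]
        ring
    _ = μ (u 0) * ∏ i ∈ Finset.range l, Q (u i) (u (i+1)) := by
        rw [← Finset.sum_mul, hμstat (u 0)]

end Stmt15Aux

namespace Stmt15Aux

set_option linter.unusedSectionVars false
set_option maxHeartbeats 1000000

variable {A : Type*} [Fintype A] [Nonempty A] [MeasurableSpace A] [MeasurableSingletonClass A]
variable (Q : A → A → ℝ) (μ : A → ℝ) (P : Measure (ℕ → A)) [IsProbabilityMeasure P]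

lemma sum_mul_ind_eq (S : Finset (ℕ → A)) (g : (ℕ → A) → ℝ) (a : ℕ → A) (ha : a ∈ S) :
    ∑ b ∈ S, g b * ind (b = a) = g a := by
  classical
  have h1 : ∀ b ∈ S, g b * ind (b = a) = if b = a then g a else 0 := by
    intro b _
    by_cases h : b = a
    · rw [ind_pos h, mul_one, if_pos h, h]
    · rw [ind_neg h, mul_zero, if_neg h]
  rw [Finset.sum_congr rfl h1, Finset.sum_ite_eq' S a (fun _ => g a), if_pos ha]

lemma twowin
    (hP : ∀ (n : ℕ) (a : ℕ → A),
      (P {ω | ∀ i ≤ n, ω i = a i}).toReal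
        = μ (a 0) * ∏ i ∈ Finset.range n, Q (a i) (a (i + 1)))
    (hμstat : ∀ y, ∑ x, μ x * Q x y = μ y)
    (hQ0 : ∀ x y, 0 ≤ Q x y) (hQ1 : ∀ x y, Q x y ≤ 1) (hμ0 : ∀ x, 0 ≤ μ x)
    (k e len len2 : ℕ) (hlen : 1 ≤ len) (hlen2 : 1 ≤ len2) (he : len ≤ e) (u u2 : ℕ → A) :
    (P ({ω | ∀ i < len, ω (k+1+i) = u i} ∩ {ω | ∀ i < len2, ω (k+e+1+i) = u2 i})).toReal
      ≤ (μ (u 0) * ∏ i ∈ Finset.range (len-1), Q (u i) (u (i+1))) *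
        ∏ i ∈ Finset.range (len2-1), Q (u2 i) (u2 (i+1)) := by
  obtain ⟨s, rfl⟩ : ∃ s, e = s + 1 := ⟨e - 1, by omega⟩
  obtain ⟨t, rfl⟩ : ∃ t, len2 = t + 1 := ⟨len2 - 1, by omega⟩
  simp only [Nat.add_sub_cancel]
  set pred2 : (ℕ → A) → Prop :=
    fun c => (∀ i < len, c i = u i) ∧ (∀ i < t+1, c (s+1+i) = u2 i) with hpred2
  set B : ℝ := ∏ i ∈ Finset.range t, Q (u2 i) (u2 (i+1)) with hB
  have hBnn : 0 ≤ B := Finset.prod_nonneg fun _ _ => hQ0 _ _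
  -- step A : reduce to FDD' form
  have hsetA : {ω : ℕ → A | ∀ i < len, ω (k+1+i) = u i} ∩ {ω | ∀ i < t+1, ω (k+(s+1)+1+i) = u2 i}
      = {ω : ℕ → A | (fun b => pred2 (shiftW b)) (clampF (s+t+2) (shiftK k ω))} := by
    ext ω
    simp only [Set.mem_inter_iff, Set.mem_setOf_eq, hpred2]
    have e1 : ∀ i, i < len → shiftW (clampF (s+t+2) (shiftK k ω)) i = ω (k+1+i) := by
      intro i hi
      simp only [shiftW, clampF, shiftK]
      congr 1
      omega
    have e2 : ∀ i, i < t+1 → shiftW (clampF (s+t+2) (shiftK k ω)) (s+1+i) = ω (k+(s+1)+1+i) := by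
      intro i hi
      simp only [shiftW, clampF, shiftK]
      congr 1
      omega
    constructor
    · rintro ⟨h1, h2⟩
      exact ⟨fun i hi => (e1 i hi).trans (h1 i hi), fun i hi => (e2 i hi).trans (h2 i hi)⟩
    · rintro ⟨h1, h2⟩
      exact ⟨fun i hi => (e1 i hi).symm.trans (h1 i hi), fun i hi => (e2 i hi).symm.trans (h2 i hi)⟩
  rw [hsetA, STAT Q μ P hP hμstat k (s+t+2) (fun b => pred2 (shiftW b))]
  have hsetB : {ω : ℕ → A | pred2 (shiftW (clampF (s+t+2) ω))}
      = {ω : ℕ → A | pred2 (clampF (s+t+1) (shiftW ω))} := by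
    ext ω
    rw [Set.mem_setOf_eq, Set.mem_setOf_eq, shiftW_clampF]
  rw [hsetB, FDD' Q μ P hP (s+t+1) pred2]
  -- step B : split the sum
  have hsplit : ∀ x : A, ∑ c ∈ WS A (s+t+1), tpr Q x (s+t+2) c * ind (pred2 c)
      = ∑ v ∈ WS A s, tpr Q x (s+1) v *
          ∑ w ∈ WS A t, tpr Q (v s) (t+1) w * ind (pred2 (glueW (s+1) v w)) :=
    fun x => sum_split s t x (fun c => ind (pred2 c))
  -- step C : inner sum evaluates
  have hiff : ∀ (v w : ℕ → A), w ∈ WS A t →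
      (pred2 (glueW (s+1) v w) ↔ ((∀ i < len, v i = u i) ∧ w = clampF t u2)) := by
    intro v w hw
    simp only [hpred2]
    constructor
    · rintro ⟨h1, h2⟩
      constructor
      · intro i hi
        have := h1 i hi
        rwa [show glueW (s+1) v w i = v i from by simp [glueW, Nat.lt_of_lt_of_le hi he]] at this
      · refine eq_of_agree_le hw (clampF_mem_WS t u2) ?_
        intro i hi
        have := h2 i (by omega)
        rw [show glueW (s+1) v w (s+1+i) = w i from by simp [glueW]; intro h; omega] at this
        rw [this, clampF_eq_of_le hi]
    · rintro ⟨h1, rfl⟩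
      constructor
      · intro i hi
        rw [show glueW (s+1) v (clampF t u2) i = v i from by
          simp [glueW, Nat.lt_of_lt_of_le hi he]]
        exact h1 i hi
      · intro i hi
        rw [show glueW (s+1) v (clampF t u2) (s+1+i) = clampF t u2 i from by simp [glueW]; intro h; omega]
        exact clampF_eq_of_le (by omega) u2
  have hinner : ∀ (v : ℕ → A),
      ∑ w ∈ WS A t, tpr Q (v s) (t+1) w * ind (pred2 (glueW (s+1) v w))
        = ind (∀ i < len, v i = u i) * tpr Q (v s) (t+1) (clampF t u2) := by
    intro v
    have h1 : ∀ w ∈ WS A t, tpr Q (v s) (t+1) w * ind (pred2 (glueW (s+1) v w))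
        = ind (∀ i < len, v i = u i) * (tpr Q (v s) (t+1) w * ind (w = clampF t u2)) := by
      intro w hw
      rw [ind_congr (hiff v w hw), ind_and]
      ring
    rw [Finset.sum_congr rfl h1, ← Finset.mul_sum,
      sum_mul_ind_eq (WS A t) (tpr Q (v s) (t+1)) (clampF t u2) (clampF_mem_WS t u2)]
  -- step D : bound the clamped transition product
  have hD : ∀ y : A, tpr Q y (t+1) (clampF t u2) ≤ B := by
    intro y
    rw [tpr_eq]
    have hc0 : clampF t u2 0 = u2 0 := clampF_eq_of_le (by omega) u2
    have hcp : ∏ i ∈ Finset.range t, Q (clampF t u2 i) (clampF t u2 (i+1))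
        = B := by
      refine Finset.prod_congr rfl fun i hi => ?_
      rw [Finset.mem_range] at hi
      rw [clampF_eq_of_le (by omega) u2, clampF_eq_of_le (by omega) u2]
    rw [hcp]
    exact mul_le_of_le_one_left hBnn (hQ1 _ _)
  -- step E : assemble the bound
  have hE : ∑ x : A, μ x * ∑ c ∈ WS A (s+t+1), tpr Q x (s+t+2) c * ind (pred2 c)
      ≤ (∑ x : A, μ x * ∑ v ∈ WS A s, tpr Q x (s+1) v * ind (∀ i < len, v i = u i)) * B := by
    rw [Finset.sum_mul]
    refine Finset.sum_le_sum fun x _ => ?_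
    rw [hsplit x, mul_assoc]
    refine mul_le_mul_of_nonneg_left ?_ (hμ0 x)
    rw [Finset.sum_mul]
    refine Finset.sum_le_sum fun v _ => ?_
    rw [hinner v, mul_assoc]
    refine mul_le_mul_of_nonneg_left ?_ (tpr_nonneg hQ0 _ _ _)
    exact mul_le_mul_of_nonneg_left (hD (v s)) (ind_nonneg _)
  refine hE.trans ?_
  -- step F : identify the remaining sum as a single-window probability
  have hF : ∑ x : A, μ x * ∑ v ∈ WS A s, tpr Q x (s+1) v * ind (∀ i < len, v i = u i)
      = (P {ω : ℕ → A | ∀ i < len, ω (0+1+i) = u i}).toReal := by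
    rw [← FDD' Q μ P hP s (fun v => ∀ i < len, v i = u i)]
    have hseteq : {ω : ℕ → A | (fun v => ∀ i < len, v i = u i) (clampF s (shiftW ω))}
        = {ω : ℕ → A | ∀ i < len, ω (0+1+i) = u i} := by
      ext ω
      simp only [Set.mem_setOf_eq]
      refine forall_congr' fun i => imp_congr_right fun hi => ?_
      have hc : clampF s (shiftW ω) i = ω (0+1+i) := by
        simp only [clampF, shiftW]
        congr 1
        omega
      rw [hc]
    rw [hseteq]
  rw [hF, winP Q μ P hP hμstat 0 len hlen u]

end Stmt15Aux

namespace Stmt15Aux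

set_option linter.unusedSectionVars false
set_option maxHeartbeats 1000000

variable {A : Type*} [Fintype A] [Nonempty A] [MeasurableSpace A] [MeasurableSingletonClass A]
variable (Q : A → A → ℝ) (μ : A → ℝ) (P : Measure (ℕ → A)) [IsProbabilityMeasure P]

/-- The event that the word `g₁ … g_n` occurs at position `k` (coordinates `k+1,…,k+n`). -/
def MatchSet (g : ℕ → A) (n k : ℕ) : Set (ℕ → A) := {ω | ∀ i < n, ω (k+1+i) = g (i+1)}

/-- probability of the word `g₁ … g_n`. -/
noncomputable def pn (Q : A → A → ℝ) (μ : A → ℝ) (g : ℕ → A) (n : ℕ) : ℝ :=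
  μ (g 1) * ∏ i ∈ Finset.range (n-1), Q (g (i+1)) (g (i+2))

lemma pn_pos {q : ℝ} (hq : 0 < q) (hQq : ∀ x y, q ≤ Q x y) (hμq : ∀ x, q ≤ μ x)
    (g : ℕ → A) (n : ℕ) : 0 < pn Q μ g n :=
  mul_pos (lt_of_lt_of_le hq (hμq _))
    (Finset.prod_pos fun _ _ => lt_of_lt_of_le hq (hQq _ _))

lemma pn_nonneg (hQ0 : ∀ x y, 0 ≤ Q x y) (hμ0 : ∀ x, 0 ≤ μ x) (g : ℕ → A) (n : ℕ) :
    0 ≤ pn Q μ g n :=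
  mul_nonneg (hμ0 _) (Finset.prod_nonneg fun _ _ => hQ0 _ _)

lemma pn_le_one (hQ0 : ∀ x y, 0 ≤ Q x y) (hQ1 : ∀ x y, Q x y ≤ 1)
    (hμ0 : ∀ x, 0 ≤ μ x) (hμ1 : ∀ x, μ x ≤ 1) (g : ℕ → A) (n : ℕ) :
    pn Q μ g n ≤ 1 := by
  have h1 : ∏ i ∈ Finset.range (n-1), Q (g (i+1)) (g (i+2)) ≤ 1 :=
    Finset.prod_le_one (fun _ _ => hQ0 _ _) (fun _ _ => hQ1 _ _)
  calc pn Q μ g n ≤ 1 * 1 := by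
        exact mul_le_mul (hμ1 _) h1 (Finset.prod_nonneg fun _ _ => hQ0 _ _) zero_le_one
    _ = 1 := mul_one 1

lemma pn_le_rpow {r : ℝ} (hr0 : 0 ≤ r) (hQr : ∀ x y, Q x y ≤ r)
    (hQ0 : ∀ x y, 0 ≤ Q x y) (hμ1 : ∀ x, μ x ≤ 1) (hμ0 : ∀ x, 0 ≤ μ x)
    (g : ℕ → A) (n : ℕ) : pn Q μ g n ≤ r ^ (n-1) := by
  have h1 : ∏ i ∈ Finset.range (n-1), Q (g (i+1)) (g (i+2)) ≤ r ^ (n-1) := by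
    calc ∏ i ∈ Finset.range (n-1), Q (g (i+1)) (g (i+2))
        ≤ ∏ _i ∈ Finset.range (n-1), r :=
          Finset.prod_le_prod (fun _ _ => hQ0 _ _) (fun _ _ => hQr _ _)
      _ = r ^ (n-1) := by rw [Finset.prod_const, Finset.card_range]
  calc pn Q μ g n ≤ 1 * (r ^ (n-1)) := by
        refine mul_le_mul (hμ1 _) h1 (Finset.prod_nonneg fun _ _ => hQ0 _ _) zero_le_one
    _ = r ^ (n-1) := one_mul _

lemma match_prob
    (hP : ∀ (n : ℕ) (a : ℕ → A),
      (P {ω | ∀ i ≤ n, ω i = a i}).toReal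
        = μ (a 0) * ∏ i ∈ Finset.range n, Q (a i) (a (i + 1)))
    (hμstat : ∀ y, ∑ x, μ x * Q x y = μ y)
    (g : ℕ → A) (n : ℕ) (hn : 1 ≤ n) (k : ℕ) :
    (P (MatchSet g n k)).toReal = pn Q μ g n := by
  have := winP Q μ P hP hμstat k n hn (fun i => g (i+1))
  unfold MatchSet pn
  rw [this]

/-- Overlap / two-window bound. -/
lemma overlap
    (hP : ∀ (n : ℕ) (a : ℕ → A),
      (P {ω | ∀ i ≤ n, ω i = a i}).toReal
        = μ (a 0) * ∏ i ∈ Finset.range n, Q (a i) (a (i + 1)))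
    (hμstat : ∀ y, ∑ x, μ x * Q x y = μ y)
    (hQ0 : ∀ x y, 0 ≤ Q x y) (hQ1 : ∀ x y, Q x y ≤ 1) (hμ0 : ∀ x, 0 ≤ μ x)
    {q r : ℝ} (hq : 0 < q) (hμq : ∀ x, q ≤ μ x) (hr0 : 0 ≤ r) (hQr : ∀ x y, Q x y ≤ r)
    (g : ℕ → A) (n : ℕ) (hn : 1 ≤ n) (k d : ℕ) (hd : 1 ≤ d) :
    (P (MatchSet g n k ∩ MatchSet g n (k+d))).toReal
      ≤ pn Q μ g n * r ^ d + pn Q μ g n * (pn Q μ g n / q) := by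
  have hpnn := pn_nonneg Q μ hQ0 hμ0 g n
  rcases le_or_gt d n with hdn | hdn
  · -- overlapping case : contained in a single window of length n+d
    set upat : ℕ → A := fun i => if i < n then g (i+1) else g (i+1-d) with hupat
    have hsub : MatchSet g n k ∩ MatchSet g n (k+d)
        ⊆ {ω : ℕ → A | ∀ i < n+d, ω (k+1+i) = upat i} := by
      rintro ω ⟨h1, h2⟩ 
      intro i hi
      by_cases hin : i < n
      · rw [hupat]
        simp only [hin, if_pos]
        exact h1 i hin
      · have hid : i - d < n := by omega
        have := h2 (i-d) hid
        rw [show k+d+1+(i-d) = k+1+i from by omega] at this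
        rw [hupat]
        simp only [hin, if_neg, if_false]
        rw [this]
        congr 1
        omega
    have hle : (P (MatchSet g n k ∩ MatchSet g n (k+d))).toReal
        ≤ (P {ω : ℕ → A | ∀ i < n+d, ω (k+1+i) = upat i}).toReal :=
      ENNReal.toReal_mono (measure_ne_top P _) (measure_mono hsub)
    rw [winP Q μ P hP hμstat k (n+d) (by omega) upat] at hle
    refine hle.trans ?_
    have hu0 : upat 0 = g 1 := by simp [hupat, show 0 < n from hn]
    have hsplit : ∏ i ∈ Finset.range (n+d-1), Q (upat i) (upat (i+1))
        = (∏ i ∈ Finset.range (n-1), Q (upat i) (upat (i+1))) *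
          ∏ i ∈ Finset.Ico (n-1) (n+d-1), Q (upat i) (upat (i+1)) := by
      exact (Finset.prod_range_mul_prod_Ico _ (by omega : n-1 ≤ n+d-1)).symm
    have hfirst : ∏ i ∈ Finset.range (n-1), Q (upat i) (upat (i+1))
        = ∏ i ∈ Finset.range (n-1), Q (g (i+1)) (g (i+2)) := by
      refine Finset.prod_congr rfl fun i hi => ?_
      rw [Finset.mem_range] at hi
      rw [hupat]
      simp only [show i < n from by omega, show i+1 < n from by omega, if_pos]
    have hsecond : ∏ i ∈ Finset.Ico (n-1) (n+d-1), Q (upat i) (upat (i+1)) ≤ r ^ d := by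
      calc ∏ i ∈ Finset.Ico (n-1) (n+d-1), Q (upat i) (upat (i+1))
          ≤ ∏ _i ∈ Finset.Ico (n-1) (n+d-1), r :=
            Finset.prod_le_prod (fun _ _ => hQ0 _ _) (fun _ _ => hQr _ _)
        _ = r ^ d := by rw [Finset.prod_const, Nat.card_Ico]; congr 1; omega
    calc μ (upat 0) * ∏ i ∈ Finset.range (n+d-1), Q (upat i) (upat (i+1))
        = pn Q μ g n * ∏ i ∈ Finset.Ico (n-1) (n+d-1), Q (upat i) (upat (i+1)) := by
          rw [hu0, hsplit, hfirst, pn]; ring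
      _ ≤ pn Q μ g n * r ^ d := by
          refine mul_le_mul_of_nonneg_left hsecond hpnn
      _ ≤ pn Q μ g n * r ^ d + pn Q μ g n * (pn Q μ g n / q) := by
          have : 0 ≤ pn Q μ g n * (pn Q μ g n / q) :=
            mul_nonneg hpnn (div_nonneg hpnn hq.le)
          linarith
  · -- disjoint windows case
    have htw := twowin Q μ P hP hμstat hQ0 hQ1 hμ0 k d n n hn hn hdn.le
      (fun i => g (i+1)) (fun i => g (i+1))
    have hev : MatchSet g n k ∩ MatchSet g n (k+d)
        = {ω : ℕ → A | ∀ i < n, ω (k+1+i) = g (i+1)} ∩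
          {ω : ℕ → A | ∀ i < n, ω (k+d+1+i) = g (i+1)} := rfl
    rw [hev]
    refine htw.trans ?_
    have hpi : ∏ i ∈ Finset.range (n-1), Q (g (i+1)) (g (i+2)) ≤ pn Q μ g n / q := by
      rw [pn]
      rw [div_eq_mul_inv, mul_comm (μ (g 1)), mul_assoc]
      have h1 : (1:ℝ) ≤ μ (g 1) * q⁻¹ := by
        rw [← div_eq_mul_inv, le_div_iff₀ hq, one_mul]
        exact hμq _
      nlinarith [Finset.prod_nonneg (fun i (_ : i ∈ Finset.range (n-1)) => hQ0 (g (i+1)) (g (i+2)))]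
    have h2 : (0:ℝ) ≤ pn Q μ g n := hpnn
    have h3 : pn Q μ g n * ∏ i ∈ Finset.range (n-1), Q (g (i+1)) (g (i+2))
        ≤ pn Q μ g n * (pn Q μ g n / q) := mul_le_mul_of_nonneg_left hpi h2
    have h4 : (0:ℝ) ≤ pn Q μ g n * r ^ d := mul_nonneg hpnn (pow_nonneg hr0 d)
    calc (μ (g 1) * ∏ i ∈ Finset.range (n-1), Q (g (i+1)) (g (i+2))) *
          ∏ i ∈ Finset.range (n-1), Q (g (i+1)) (g (i+2))
        = pn Q μ g n * ∏ i ∈ Finset.range (n-1), Q (g (i+1)) (g (i+2)) := by rw [pn]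
      _ ≤ pn Q μ g n * (pn Q μ g n / q) := h3
      _ ≤ pn Q μ g n * r ^ d + pn Q μ g n * (pn Q μ g n / q) := by linarith

end Stmt15Aux

namespace Stmt15Aux

set_option linter.unusedSectionVars false
set_option maxHeartbeats 2000000

variable {A : Type*} [Fintype A] [Nonempty A] [MeasurableSpace A] [MeasurableSingletonClass A]
variable (Q : A → A → ℝ) (μ : A → ℝ) (P : Measure (ℕ → A)) [IsProbabilityMeasure P]

lemma secondmoment
    (hP : ∀ (n : ℕ) (a : ℕ → A),
      (P {ω | ∀ i ≤ n, ω i = a i}).toReal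
        = μ (a 0) * ∏ i ∈ Finset.range n, Q (a i) (a (i + 1)))
    (hμstat : ∀ y, ∑ x, μ x * Q x y = μ y)
    (hQ0 : ∀ x y, 0 ≤ Q x y) (hQ1 : ∀ x y, Q x y ≤ 1)
    (hμ0 : ∀ x, 0 ≤ μ x) (hμ1 : ∀ x, μ x ≤ 1)
    {q r : ℝ} (hq : 0 < q) (hq2 : q ≤ 1/2) (hQq : ∀ x y, q ≤ Q x y) (hμq : ∀ x, q ≤ μ x)
    (hr0 : 0 ≤ r) (hrq : r = 1 - q) (hQr : ∀ x y, Q x y ≤ r)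
    (g : ℕ → A) (n : ℕ) (hn : 1 ≤ n)
    (Δ : ℕ) (hΔl : 1 / pn Q μ g n ≤ (Δ:ℝ)) (hΔu : (Δ:ℝ) ≤ 1 / pn Q μ g n + 1) :
    q / 30 ≤ (P {ω : ℕ → A | ∃ k ≤ Δ, ∀ i < n, ω (k+1+i) = g (i+1)}).toReal := by
  classical
  have hppos : 0 < pn Q μ g n := pn_pos Q μ hq hQq hμq g n
  have hp1 : pn Q μ g n ≤ 1 := pn_le_one Q μ hQ0 hQ1 hμ0 hμ1 g n
  set p : ℝ := pn Q μ g n with hp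
  set m : ℕ := Δ + n with hm
  set R : Finset ℕ := Finset.range (Δ+1) with hR
  set cond : ℕ → (ℕ → A) → Prop := fun k a => ∀ i < n, a (k+1+i) = g (i+1) with hcond
  set Nf : (ℕ → A) → ℕ := fun a => (R.filter (fun k => cond k a)).card with hNf
  set τ : ℕ → ℕ → ℝ := fun k l => (P (MatchSet g n k ∩ MatchSet g n l)).toReal with hτ
  have hwnn : ∀ a, 0 ≤ wpr Q μ m a := fun a => wpr_nonneg hQ0 hμ0 m a
  have hNfcast : ∀ a, ((Nf a : ℝ)) = ∑ k ∈ R, ind (cond k a) := by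
    intro a
    simp only [hNf]
    rw [Finset.card_filter]
    push_cast
    refine Finset.sum_congr rfl fun k _ => ?_
    by_cases h : cond k a
    · rw [if_pos h, ind_pos h]
    · rw [if_neg h, ind_neg h]
  have hFk : ∀ k, k ≤ Δ → ∑ a ∈ WS A m, wpr Q μ m a * ind (cond k a) = p := by
    intro k hk
    have hset : {ω : ℕ → A | cond k (clampF m ω)} = MatchSet g n k := by
      ext ω
      simp only [hcond, Set.mem_setOf_eq, MatchSet]
      refine forall_congr' fun i => imp_congr_right fun hi => ?_
      rw [clampF_eq_of_le (by omega) ω]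
    calc ∑ a ∈ WS A m, wpr Q μ m a * ind (cond k a)
        = (P {ω : ℕ → A | cond k (clampF m ω)}).toReal :=
          (FDD Q μ P hP m (cond k)).symm
      _ = (P (MatchSet g n k)).toReal := by rw [hset]
      _ = p := match_prob Q μ P hP hμstat g n hn k
  have hFkl : ∀ k, k ≤ Δ → ∀ l, l ≤ Δ →
      ∑ a ∈ WS A m, wpr Q μ m a * (ind (cond k a) * ind (cond l a)) = τ k l := by
    intro k hk l hl
    have hset : {ω : ℕ → A | cond k (clampF m ω) ∧ cond l (clampF m ω)}
        = MatchSet g n k ∩ MatchSet g n l := by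
      ext ω
      simp only [hcond, Set.mem_setOf_eq, MatchSet, Set.mem_inter_iff]
      constructor
      · rintro ⟨h1, h2⟩
        refine ⟨fun i hi => ?_, fun i hi => ?_⟩
        · rw [← clampF_eq_of_le (show k+1+i ≤ m from by omega) ω]; exact h1 i hi
        · rw [← clampF_eq_of_le (show l+1+i ≤ m from by omega) ω]; exact h2 i hi
      · rintro ⟨h1, h2⟩
        refine ⟨fun i hi => ?_, fun i hi => ?_⟩
        · rw [clampF_eq_of_le (show k+1+i ≤ m from by omega) ω]; exact h1 i hi
        · rw [clampF_eq_of_le (show l+1+i ≤ m from by omega) ω]; exact h2 i hi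
    calc ∑ a ∈ WS A m, wpr Q μ m a * (ind (cond k a) * ind (cond l a))
        = ∑ a ∈ WS A m, wpr Q μ m a * ind (cond k a ∧ cond l a) := by
          refine Finset.sum_congr rfl fun a _ => ?_
          rw [ind_and]
      _ = (P {ω : ℕ → A | cond k (clampF m ω) ∧ cond l (clampF m ω)}).toReal :=
          (FDD Q μ P hP m (fun a => cond k a ∧ cond l a)).symm
      _ = τ k l := by rw [hset]
  -- S1
  set S1 : ℝ := ∑ a ∈ WS A m, wpr Q μ m a * (Nf a : ℝ) with hS1
  have hS1val : S1 = ((Δ:ℝ)+1) * p := by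
    rw [hS1]
    calc ∑ a ∈ WS A m, wpr Q μ m a * (Nf a : ℝ)
        = ∑ a ∈ WS A m, ∑ k ∈ R, wpr Q μ m a * ind (cond k a) := by
          refine Finset.sum_congr rfl fun a _ => ?_
          rw [hNfcast a, Finset.mul_sum]
      _ = ∑ k ∈ R, ∑ a ∈ WS A m, wpr Q μ m a * ind (cond k a) := Finset.sum_comm
      _ = ∑ k ∈ R, p := by
          refine Finset.sum_congr rfl fun k hk => ?_
          exact hFk k (by rw [hR] at hk; rw [Finset.mem_range] at hk; omega)
      _ = ((Δ:ℝ)+1) * p := by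
          rw [Finset.sum_const, hR, Finset.card_range, nsmul_eq_mul]
          push_cast
          ring
  -- S2
  set S2 : ℝ := ∑ a ∈ WS A m, wpr Q μ m a * (Nf a : ℝ)^2 with hS2
  have hS2val : S2 = ∑ k ∈ R, ∑ l ∈ R, τ k l := by
    rw [hS2]
    calc ∑ a ∈ WS A m, wpr Q μ m a * (Nf a : ℝ)^2
        = ∑ a ∈ WS A m, ∑ k ∈ R, ∑ l ∈ R, wpr Q μ m a * (ind (cond k a) * ind (cond l a)) := by
          refine Finset.sum_congr rfl fun a _ => ?_
          rw [hNfcast a, sq, Finset.sum_mul_sum]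
          rw [Finset.mul_sum]
          refine Finset.sum_congr rfl fun k _ => ?_
          rw [Finset.mul_sum]
      _ = ∑ k ∈ R, ∑ l ∈ R, ∑ a ∈ WS A m, wpr Q μ m a * (ind (cond k a) * ind (cond l a)) := by
          rw [Finset.sum_comm]
          refine Finset.sum_congr rfl fun k _ => Finset.sum_comm
      _ = ∑ k ∈ R, ∑ l ∈ R, τ k l := by
          refine Finset.sum_congr rfl fun k hk => Finset.sum_congr rfl fun l hl => ?_
          rw [hR, Finset.mem_range] at hk hl
          exact hFkl k (by omega) l (by omega)
  -- bounds on Δ p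
  have hΔp2 : (Δ:ℝ) * p ≤ 2 := by
    have h1 : (Δ:ℝ) * p ≤ (1/p + 1) * p := mul_le_mul_of_nonneg_right hΔu hppos.le
    have h2 : (1/p + 1) * p = 1 + p := by field_simp
    rw [h2] at h1
    linarith
  have hΔp3 : ((Δ:ℝ)+1) * p ≤ 3 := by
    have : ((Δ:ℝ)+1) * p = (Δ:ℝ)*p + p := by ring
    rw [this]
    linarith
  have hΔp1 : 1 ≤ (Δ:ℝ) * p := by
    have h1 : (1/p) * p ≤ (Δ:ℝ) * p := mul_le_mul_of_nonneg_right hΔl hppos.le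
    rw [one_div, inv_mul_cancel₀ hppos.ne'] at h1
    exact h1
  -- geometric bound
  have hgeo : ∑ d ∈ Finset.Icc 1 Δ, r ^ d ≤ 1/q := by
    have hr1 : r ≤ 1 := by rw [hrq]; linarith
    have hsum : ∑ j ∈ Finset.range Δ, r ^ j ≤ 1/q := by
      have h := geom_sum_mul r Δ
      have h2 : (∑ i ∈ Finset.range Δ, r ^ i) * q = 1 - r^Δ := by
        have : r - 1 = -q := by rw [hrq]; ring
        calc (∑ i ∈ Finset.range Δ, r ^ i) * q
            = -((∑ i ∈ Finset.range Δ, r ^ i) * (r - 1)) := by rw [this]; ring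
          _ = -(r^Δ - 1) := by rw [h]
          _ = 1 - r^Δ := by ring
      have h3 : (∑ i ∈ Finset.range Δ, r ^ i) * q ≤ 1 := by
        rw [h2]
        have : 0 ≤ r^Δ := pow_nonneg hr0 Δ
        linarith
      rw [le_div_iff₀ hq]
      exact h3
    calc ∑ d ∈ Finset.Icc 1 Δ, r ^ d
        = ∑ d ∈ Finset.Ico 1 (Δ+1), r ^ d := by rw [Finset.Ico_add_one_right_eq_Icc]
      _ = ∑ j ∈ Finset.range Δ, r ^ (1+j) := by
          rw [Finset.sum_Ico_eq_sum_range]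
          simp
      _ = r * ∑ j ∈ Finset.range Δ, r ^ j := by
          rw [Finset.mul_sum]
          refine Finset.sum_congr rfl fun j _ => ?_
          rw [pow_add, pow_one]
      _ ≤ 1 * (1/q) := by
          refine mul_le_mul hr1 hsum (Finset.sum_nonneg fun j _ => pow_nonneg hr0 j) zero_le_one
      _ = 1/q := one_mul _
  -- row bound
  set Bd : ℕ → ℝ := fun d => p * r^d + p*(p/q) with hBdd
  have hBd0 : ∀ d, 0 ≤ Bd d := by
    intro d
    exact add_nonneg (mul_nonneg hppos.le (pow_nonneg hr0 d))
      (mul_nonneg hppos.le (div_nonneg hppos.le hq.le))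
  have hτd : ∀ k l, k < l → τ k l ≤ Bd (l-k) := by
    intro k l hkl
    have := overlap Q μ P hP hμstat hQ0 hQ1 hμ0 hq hμq hr0 hQr g n hn k (l-k) (by omega)
    rw [show k + (l-k) = l from by omega] at this
    exact this
  have hτsym : ∀ k l, τ k l = τ l k := by
    intro k l
    show (P (MatchSet g n k ∩ MatchSet g n l)).toReal
      = (P (MatchSet g n l ∩ MatchSet g n k)).toReal
    rw [Set.inter_comm]
  have hτkk : ∀ k, τ k k = p := by
    intro k
    show (P (MatchSet g n k ∩ MatchSet g n k)).toReal = p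
    rw [Set.inter_self]
    exact match_prob Q μ P hP hμstat g n hn k
  have hrow : ∀ k ∈ R, ∑ l ∈ R, τ k l ≤ p + 2 * ∑ d ∈ Finset.Icc 1 Δ, Bd d := by
    intro k hkR
    rw [← Finset.add_sum_erase R (fun l => τ k l) hkR]
    have hkΔ : k ≤ Δ := by rw [hR, Finset.mem_range] at hkR; omega
    refine add_le_add (le_of_eq (hτkk k)) ?_
    rw [← Finset.sum_filter_add_sum_filter_not (R.erase k) (fun l => l < k) (fun l => τ k l)]
    have hpart1 : ∑ l ∈ (R.erase k).filter (fun l => l < k), τ k l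
        ≤ ∑ d ∈ Finset.Icc 1 Δ, Bd d := by
      calc ∑ l ∈ (R.erase k).filter (fun l => l < k), τ k l
          ≤ ∑ l ∈ (R.erase k).filter (fun l => l < k), Bd (k - l) := by
            refine Finset.sum_le_sum fun l hl => ?_
            simp only [Finset.mem_filter] at hl
            rw [hτsym k l]
            exact hτd l k hl.2
        _ = ∑ d ∈ ((R.erase k).filter (fun l => l < k)).image (fun l => k - l), Bd d := by
            rw [Finset.sum_image]
            intro x hx y hy hxy
            simp only [Finset.mem_coe, Finset.mem_filter] at hx hy hxy
            omega
        _ ≤ ∑ d ∈ Finset.Icc 1 Δ, Bd d := by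
            refine Finset.sum_le_sum_of_subset_of_nonneg ?_ (fun d _ _ => hBd0 d)
            intro d hd
            simp only [Finset.mem_image, Finset.mem_filter, Finset.mem_erase, hR,
              Finset.mem_range] at hd
            obtain ⟨l, ⟨⟨hlk, hlΔ⟩, hlk2⟩, rfl⟩ := hd
            simp only [Finset.mem_Icc]
            omega
    have hpart2 : ∑ l ∈ (R.erase k).filter (fun l => ¬ l < k), τ k l
        ≤ ∑ d ∈ Finset.Icc 1 Δ, Bd d := by
      calc ∑ l ∈ (R.erase k).filter (fun l => ¬ l < k), τ k l
          ≤ ∑ l ∈ (R.erase k).filter (fun l => ¬ l < k), Bd (l - k) := by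
            refine Finset.sum_le_sum fun l hl => ?_
            simp only [Finset.mem_filter, Finset.mem_erase] at hl
            have : k < l := by omega
            exact hτd k l this
        _ = ∑ d ∈ ((R.erase k).filter (fun l => ¬ l < k)).image (fun l => l - k), Bd d := by
            rw [Finset.sum_image]
            intro x hx y hy hxy
            simp only [Finset.mem_coe, Finset.mem_filter, Finset.mem_erase] at hx hy hxy
            omega
        _ ≤ ∑ d ∈ Finset.Icc 1 Δ, Bd d := by
            refine Finset.sum_le_sum_of_subset_of_nonneg ?_ (fun d _ _ => hBd0 d)
            intro d hd
            simp only [Finset.mem_image, Finset.mem_filter, Finset.mem_erase, hR,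
              Finset.mem_range] at hd
            obtain ⟨l, ⟨⟨hlk, hlΔ⟩, hlk2⟩, rfl⟩ := hd
            simp only [Finset.mem_Icc]
            omega
    linarith
  -- S2 bound
  have hBdsum : ∑ d ∈ Finset.Icc 1 Δ, Bd d ≤ 3 * (p/q) := by
    have h1 : ∑ d ∈ Finset.Icc 1 Δ, Bd d
        = p * (∑ d ∈ Finset.Icc 1 Δ, r^d) + (Δ:ℝ) * (p*(p/q)) := by
      rw [hBdd]
      rw [Finset.sum_add_distrib, ← Finset.mul_sum, Finset.sum_const, Nat.card_Icc]
      simp only [nsmul_eq_mul]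
      push_cast
      ring
    rw [h1]
    have h2 : p * (∑ d ∈ Finset.Icc 1 Δ, r^d) ≤ p * (1/q) :=
      mul_le_mul_of_nonneg_left hgeo hppos.le
    have h3 : (Δ:ℝ) * (p*(p/q)) = ((Δ:ℝ)*p) * (p/q) := by ring
    have h4 : ((Δ:ℝ)*p) * (p/q) ≤ 2 * (p/q) :=
      mul_le_mul_of_nonneg_right hΔp2 (div_nonneg hppos.le hq.le)
    have h5 : p * (1/q) = p/q := by ring
    rw [h3]
    calc p * (∑ d ∈ Finset.Icc 1 Δ, r^d) + ((Δ:ℝ)*p) * (p/q)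
        ≤ p * (1/q) + 2 * (p/q) := add_le_add h2 h4
      _ = 3 * (p/q) := by rw [h5]; ring
  have hS2bound : S2 ≤ 30 / q := by
    rw [hS2val]
    calc ∑ k ∈ R, ∑ l ∈ R, τ k l
        ≤ ∑ k ∈ R, (p + 2 * ∑ d ∈ Finset.Icc 1 Δ, Bd d) := Finset.sum_le_sum hrow
      _ = ((Δ:ℝ)+1) * (p + 2 * ∑ d ∈ Finset.Icc 1 Δ, Bd d) := by
          rw [Finset.sum_const, hR, Finset.card_range, nsmul_eq_mul]
          push_cast
          ring
      _ ≤ ((Δ:ℝ)+1) * (p + 2 * (3 * (p/q))) := by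
          refine mul_le_mul_of_nonneg_left ?_ (by positivity)
          linarith
      _ = ((Δ:ℝ)+1) * p * (1 + 6/q) := by field_simp; ring
      _ ≤ 3 * (1 + 6/q) := by
          refine mul_le_mul_of_nonneg_right hΔp3 ?_
          have : 0 < 6/q := by positivity
          linarith
      _ ≤ 30 / q := by
          rw [le_div_iff₀ hq]
          have h6 : (6/q) * q = 6 := div_mul_cancel₀ 6 hq.ne'
          nlinarith
  -- PEx
  set PEx : ℝ := ∑ a ∈ WS A m, wpr Q μ m a * ind (1 ≤ Nf a) with hPEx
  have hPExval : PEx = (P {ω : ℕ → A | ∃ k ≤ Δ, ∀ i < n, ω (k+1+i) = g (i+1)}).toReal := by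
    rw [hPEx, ← FDD Q μ P hP m (fun a => 1 ≤ Nf a)]
    have hset : {ω : ℕ → A | 1 ≤ Nf (clampF m ω)}
        = {ω : ℕ → A | ∃ k ≤ Δ, ∀ i < n, ω (k+1+i) = g (i+1)} := by
      ext ω
      simp only [Set.mem_setOf_eq, hNf]
      constructor
      · intro h
        obtain ⟨k, hk⟩ := Finset.card_pos.mp h
        rw [Finset.mem_filter] at hk
        obtain ⟨hkR, hkc⟩ := hk
        rw [hR, Finset.mem_range] at hkR
        refine ⟨k, by omega, fun i hi => ?_⟩
        have h2 := hkc i hi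
        rwa [clampF_eq_of_le (by omega) ω] at h2
      · rintro ⟨k, hkΔ, hkc⟩
        refine Finset.card_pos.mpr ⟨k, ?_⟩
        rw [Finset.mem_filter]
        refine ⟨by rw [hR]; exact Finset.mem_range.mpr (by omega), fun i hi => ?_⟩
        rw [clampF_eq_of_le (by omega) ω]
        exact hkc i hi
    rw [hset]
  -- Cauchy-Schwarz
  have hCS : S1^2 ≤ PEx * S2 := by
    have h := Finset.sum_mul_sq_le_sq_mul_sq (WS A m)
      (fun a => Real.sqrt (wpr Q μ m a) * ind (1 ≤ Nf a))
      (fun a => Real.sqrt (wpr Q μ m a) * (Nf a : ℝ))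
    have e1 : ∑ a ∈ WS A m, (Real.sqrt (wpr Q μ m a) * ind (1 ≤ Nf a)) *
        (Real.sqrt (wpr Q μ m a) * (Nf a : ℝ)) = S1 := by
      rw [hS1]
      refine Finset.sum_congr rfl fun a _ => ?_
      have hs : Real.sqrt (wpr Q μ m a) * Real.sqrt (wpr Q μ m a) = wpr Q μ m a :=
        Real.mul_self_sqrt (hwnn a)
      by_cases h1 : 1 ≤ Nf a
      · rw [ind_pos h1]
        calc (Real.sqrt (wpr Q μ m a) * 1) * (Real.sqrt (wpr Q μ m a) * (Nf a : ℝ))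
            = (Real.sqrt (wpr Q μ m a) * Real.sqrt (wpr Q μ m a)) * (Nf a : ℝ) := by ring
          _ = wpr Q μ m a * (Nf a : ℝ) := by rw [hs]
      · have h0 : Nf a = 0 := by omega
        rw [ind_neg h1, h0]
        simp
    have e2 : ∑ a ∈ WS A m, (Real.sqrt (wpr Q μ m a) * ind (1 ≤ Nf a))^2 = PEx := by
      rw [hPEx]
      refine Finset.sum_congr rfl fun a _ => ?_
      have hs : Real.sqrt (wpr Q μ m a) ^ 2 = wpr Q μ m a := Real.sq_sqrt (hwnn a)
      rw [mul_pow, hs]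
      congr 1
      by_cases h1 : 1 ≤ Nf a
      · rw [ind_pos h1, one_pow]
      · rw [ind_neg h1]
        norm_num
    have e3 : ∑ a ∈ WS A m, (Real.sqrt (wpr Q μ m a) * (Nf a : ℝ))^2 = S2 := by
      rw [hS2]
      refine Finset.sum_congr rfl fun a _ => ?_
      have hs : Real.sqrt (wpr Q μ m a) ^ 2 = wpr Q μ m a := Real.sq_sqrt (hwnn a)
      rw [mul_pow, hs]
    rw [e1, e2, e3] at h
    exact h
  have hPEx0 : 0 ≤ PEx := Finset.sum_nonneg fun a _ => mul_nonneg (hwnn a) (ind_nonneg _)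
  have hS1one : 1 ≤ S1 := by
    rw [hS1val]
    nlinarith [hΔp1, hppos]
  have h1 : 1 ≤ PEx * S2 := by nlinarith [hCS, hS1one]
  have h2 : PEx * S2 ≤ PEx * (30/q) := mul_le_mul_of_nonneg_left hS2bound hPEx0
  have h3 : 1 ≤ PEx * (30/q) := h1.trans h2
  rw [← hPExval]
  rw [div_le_iff₀ (by norm_num : (0:ℝ) < 30)]
  have h4 : q * 1 ≤ q * (PEx * (30/q)) := mul_le_mul_of_nonneg_left h3 hq.le
  have h5 : q * (PEx * (30/q)) = PEx * 30 := by
    field_simp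
  linarith

end Stmt15Aux

namespace Stmt15Aux

set_option linter.unusedSectionVars false
set_option maxHeartbeats 2000000

variable {A : Type*} [Fintype A] [Nonempty A] [MeasurableSpace A] [MeasurableSingletonClass A]
variable (Q : A → A → ℝ) (μ : A → ℝ) (P : Measure (ℕ → A)) [IsProbabilityMeasure P]

/-- avoidance of all matches inside `K` blocks, in continuation coordinates. -/
def condC (g : ℕ → A) (n Δ L K : ℕ) (c : ℕ → A) : Prop :=
  ∀ j < K, ∀ s, 1 ≤ s → s ≤ Δ+1 → ¬ (∀ i < n, c (j*L + s + i) = g (i+1))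

/-- a match occurs somewhere inside the block. -/
def hasM (g : ℕ → A) (n Δ : ℕ) (u : ℕ → A) : Prop :=
  ∃ s, 1 ≤ s ∧ s ≤ Δ+1 ∧ ∀ i < n, u (s+i) = g (i+1)

lemma blockavoid
    (hP : ∀ (n : ℕ) (a : ℕ → A),
      (P {ω | ∀ i ≤ n, ω i = a i}).toReal
        = μ (a 0) * ∏ i ∈ Finset.range n, Q (a i) (a (i + 1)))
    (hμstat : ∀ y, ∑ x, μ x * Q x y = μ y)
    (hQrow : ∀ x, ∑ y, Q x y = 1) (hμsum : ∑ x, μ x = 1)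
    (hQ0 : ∀ x y, 0 ≤ Q x y) (hQ1 : ∀ x y, Q x y ≤ 1)
    (hμ0 : ∀ x, 0 ≤ μ x) (hμ1 : ∀ x, μ x ≤ 1)
    {q r : ℝ} (hq : 0 < q) (hq2 : q ≤ 1/2) (hQq : ∀ x y, q ≤ Q x y) (hμq : ∀ x, q ≤ μ x)
    (hr0 : 0 ≤ r) (hrq : r = 1 - q) (hQr : ∀ x y, Q x y ≤ r)
    (g : ℕ → A) (n : ℕ) (hn : 1 ≤ n)
    (Δ : ℕ) (hΔl : 1 / pn Q μ g n ≤ (Δ:ℝ)) (hΔu : (Δ:ℝ) ≤ 1 / pn Q μ g n + 1)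
    (K : ℕ) (hK : 1 ≤ K) :
    (P {ω : ℕ → A | ∀ j < K, ∀ s, 1 ≤ s → s ≤ Δ+1 →
        ¬ (∀ i < n, ω (j*(Δ+n+1) + s + 1 + i) = g (i+1))}).toReal
      ≤ (1 - q * (q/30))^K := by
  classical
  set L : ℕ := Δ + n + 1 with hLdef
  have hL1 : 1 ≤ L := by omega
  set ε : ℝ := q / 30 with hε
  have hε0 : 0 < ε := by positivity
  have hqε1 : q * ε ≤ 1 := by
    rw [hε]
    nlinarith
  have hqε0 : 0 ≤ 1 - q * ε := by linarith
  -- the stationary block probability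
  have hEx : ε ≤ (P {ω : ℕ → A | ∃ k ≤ Δ, ∀ i < n, ω (k+1+i) = g (i+1)}).toReal :=
    secondmoment Q μ P hP hμstat hQ0 hQ1 hμ0 hμ1 hq hq2 hQq hμq hr0 hrq hQr g n hn Δ hΔl hΔu
  -- BLOCK1 : conditional probability of a match within one block
  have hbase : ∀ x : A,
      q * ε ≤ ∑ u ∈ WS A (L-1), tpr Q x ((L-1)+1) u * ind (hasM g n Δ u) := by
    intro x
    have hstep2 : ∑ u ∈ WS A (L-1), wpr Q μ (L-1) u * ind (hasM g n Δ u)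
        = (P {ω : ℕ → A | ∃ k ≤ Δ, ∀ i < n, ω (k+1+i) = g (i+1)}).toReal := by
      rw [← FDD Q μ P hP (L-1) (hasM g n Δ)]
      have hset : {ω : ℕ → A | hasM g n Δ (clampF (L-1) ω)}
          = {ω : ℕ → A | ∃ k ≤ Δ, ∀ i < n, ω (k+1+i) = g (i+1)} := by
        ext ω
        simp only [Set.mem_setOf_eq, hasM]
        constructor
        · rintro ⟨s, hs1, hs2, hsm⟩
          refine ⟨s-1, by omega, fun i hi => ?_⟩
          have h2 := hsm i hi
          rw [clampF_eq_of_le (by omega) ω] at h2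
          rw [show s-1+1+i = s+i from by omega]
          exact h2
        · rintro ⟨k, hk, hkm⟩
          refine ⟨k+1, by omega, by omega, fun i hi => ?_⟩
          rw [clampF_eq_of_le (by omega) ω, show k+1+i = k+1+i from rfl]
          exact hkm i hi
      rw [hset]
    have hper : ∀ u ∈ WS A (L-1),
        q * (wpr Q μ (L-1) u * ind (hasM g n Δ u))
          ≤ tpr Q x ((L-1)+1) u * ind (hasM g n Δ u) := by
      intro u _
      rw [tpr_eq]
      have hprod0 : 0 ≤ ∏ i ∈ Finset.range (L-1), Q (u i) (u (i+1)) :=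
        Finset.prod_nonneg fun _ _ => hQ0 _ _
      have h1 : q * μ (u 0) ≤ Q x (u 0) := by
        calc q * μ (u 0) ≤ q * 1 := by
              exact mul_le_mul_of_nonneg_left (hμ1 _) hq.le
          _ = q := mul_one q
          _ ≤ Q x (u 0) := hQq x (u 0)
      have h2 : 0 ≤ (∏ i ∈ Finset.range (L-1), Q (u i) (u (i+1))) * ind (hasM g n Δ u) :=
        mul_nonneg hprod0 (ind_nonneg _)
      calc q * (wpr Q μ (L-1) u * ind (hasM g n Δ u))
          = (q * μ (u 0)) * ((∏ i ∈ Finset.range (L-1), Q (u i) (u (i+1)))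
              * ind (hasM g n Δ u)) := by rw [wpr]; ring
        _ ≤ Q x (u 0) * ((∏ i ∈ Finset.range (L-1), Q (u i) (u (i+1)))
              * ind (hasM g n Δ u)) := mul_le_mul_of_nonneg_right h1 h2
        _ = Q x (u 0) * (∏ i ∈ Finset.range (L-1), Q (u i) (u (i+1)))
              * ind (hasM g n Δ u) := by ring
    calc q * ε
        ≤ q * ∑ u ∈ WS A (L-1), wpr Q μ (L-1) u * ind (hasM g n Δ u) := by
          rw [hstep2]
          exact mul_le_mul_of_nonneg_left hEx hq.le
      _ = ∑ u ∈ WS A (L-1), q * (wpr Q μ (L-1) u * ind (hasM g n Δ u)) := Finset.mul_sum _ _ _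
      _ ≤ ∑ u ∈ WS A (L-1), tpr Q x ((L-1)+1) u * ind (hasM g n Δ u) :=
          Finset.sum_le_sum hper
  -- one-block bound
  have honeblock : ∀ x : A,
      ∑ u ∈ WS A (L-1), tpr Q x ((L-1)+1) u * ind (¬ hasM g n Δ u) ≤ 1 - q * ε := by
    intro x
    have h1 : ∑ u ∈ WS A (L-1), tpr Q x ((L-1)+1) u * ind (¬ hasM g n Δ u)
        = (∑ u ∈ WS A (L-1), tpr Q x ((L-1)+1) u)
          - ∑ u ∈ WS A (L-1), tpr Q x ((L-1)+1) u * ind (hasM g n Δ u) := by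
      rw [← Finset.sum_sub_distrib]
      refine Finset.sum_congr rfl fun u _ => ?_
      rw [ind_not]
      ring
    rw [h1, tpr_sum hQrow (L-1) x]
    have := hbase x
    linarith
  -- glue index facts
  have hg1 : ∀ (u w : ℕ → A) (s i : ℕ), 1 ≤ s → s ≤ Δ+1 → i < n →
      glueW L u w (0*L + s + i) = u (s + i) := by
    intro u w s i hs1 hs2 hi
    have hlt : 0*L + s + i < L := by omega
    simp only [glueW, if_pos hlt]
    congr 1
    omega
  have hg2 : ∀ (u w : ℕ → A) (j s i : ℕ), 1 ≤ s → s ≤ Δ+1 → i < n →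
      glueW L u w ((j+1)*L + s + i) = w (j*L + s + i) := by
    intro u w j s i hs1 hs2 hi
    have hmul : (j+1)*L = j*L + L := by rw [Nat.succ_mul]
    have hge : ¬ ((j+1)*L + s + i < L) := by omega
    simp only [glueW, if_neg hge]
    congr 1
    omega
  -- the main induction
  have claim : ∀ K' : ℕ, ∀ x : A,
      ∑ c ∈ WS A ((K'+1)*L - 1), tpr Q x ((K'+1)*L) c * ind (condC g n Δ L (K'+1) c)
        ≤ (1 - q*ε)^(K'+1) := by
    intro K'
    induction K' with
    | zero =>
        intro x
        have e0 : (0+1)*L - 1 = L - 1 := by omega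
        have e1 : (0+1)*L = (L-1)+1 := by omega
        rw [e0, e1, pow_one]
        have hcond1 : ∀ c : ℕ → A, condC g n Δ L (0+1) c ↔ ¬ hasM g n Δ c := by
          intro c
          unfold condC hasM
          constructor
          · intro h
            rintro ⟨s, hs1, hs2, hsm⟩
            refine h 0 (by omega) s hs1 hs2 fun i hi => ?_
            rw [show 0*L + s + i = s + i from by omega]
            exact hsm i hi
          · intro h j hj s hs1 hs2 hsm
            have hj0 : j = 0 := by omega
            subst hj0
            exact h ⟨s, hs1, hs2, fun i hi => by
              rw [← show 0*L + s + i = s + i from by omega]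
              exact hsm i hi⟩
        calc ∑ c ∈ WS A (L-1), tpr Q x ((L-1)+1) c * ind (condC g n Δ L (0+1) c)
            = ∑ c ∈ WS A (L-1), tpr Q x ((L-1)+1) c * ind (¬ hasM g n Δ c) := by
              refine Finset.sum_congr rfl fun c _ => ?_
              rw [ind_congr (hcond1 c)]
          _ ≤ 1 - q*ε := honeblock x
    | succ K' ih =>
        intro x
        have hM1 : 1 ≤ (K'+1)*L := Nat.one_le_iff_ne_zero.mpr
          (Nat.mul_ne_zero (Nat.succ_ne_zero K') (by omega))
        have e1 : (K'+1+1)*L - 1 = (L-1) + ((K'+1)*L - 1) + 1 := by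
          rw [Nat.succ_mul (K'+1) L]
          omega
        have e2 : (K'+1+1)*L = (L-1) + ((K'+1)*L - 1) + 2 := by
          rw [Nat.succ_mul (K'+1) L]
          omega
        rw [e1, e2]
        refine le_trans (le_of_eq (sum_split (L-1) ((K'+1)*L - 1) x
          (fun c => ind (condC g n Δ L (K'+1+1) c)))) ?_
        have e3 : ((K'+1)*L - 1) + 1 = (K'+1)*L := by omega
        -- glue decomposition of the avoidance condition
        have hglue : ∀ (u w : ℕ → A),
            condC g n Δ L (K'+1+1) (glueW ((L-1)+1) u w)
              ↔ (¬ hasM g n Δ u ∧ condC g n Δ L (K'+1) w) := by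
          intro u w
          have eL : (L-1)+1 = L := by omega
          rw [eL]
          unfold condC hasM
          constructor
          · intro h
            constructor
            · rintro ⟨s, hs1, hs2, hsm⟩
              refine h 0 (by omega) s hs1 hs2 fun i hi => ?_
              rw [hg1 u w s i hs1 hs2 hi]
              exact hsm i hi
            · intro j hj s hs1 hs2 hsm
              refine h (j+1) (by omega) s hs1 hs2 fun i hi => ?_
              rw [hg2 u w j s i hs1 hs2 hi]
              exact hsm i hi
          · rintro ⟨h1, h2⟩ j hj s hs1 hs2 hsm
            cases j with
            | zero =>
                refine h1 ⟨s, hs1, hs2, fun i hi => ?_⟩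
                rw [← hg1 u w s i hs1 hs2 hi]
                exact hsm i hi
            | succ j =>
                refine h2 j (by omega) s hs1 hs2 fun i hi => ?_
                rw [← hg2 u w j s i hs1 hs2 hi]
                exact hsm i hi
        calc ∑ u ∈ WS A (L-1), tpr Q x ((L-1)+1) u *
              ∑ w ∈ WS A ((K'+1)*L - 1), tpr Q (u (L-1)) (((K'+1)*L - 1)+1) w *
                ind (condC g n Δ L (K'+1+1) (glueW ((L-1)+1) u w))
            ≤ ∑ u ∈ WS A (L-1), tpr Q x ((L-1)+1) u *
              (ind (¬ hasM g n Δ u) * (1 - q*ε)^(K'+1)) := by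
              refine Finset.sum_le_sum fun u _ => ?_
              refine mul_le_mul_of_nonneg_left ?_ (tpr_nonneg hQ0 _ _ _)
              calc ∑ w ∈ WS A ((K'+1)*L - 1), tpr Q (u (L-1)) (((K'+1)*L - 1)+1) w *
                    ind (condC g n Δ L (K'+1+1) (glueW ((L-1)+1) u w))
                  = ∑ w ∈ WS A ((K'+1)*L - 1), ind (¬ hasM g n Δ u) *
                      (tpr Q (u (L-1)) (((K'+1)*L - 1)+1) w * ind (condC g n Δ L (K'+1) w)) := by
                    refine Finset.sum_congr rfl fun w _ => ?_
                    rw [ind_congr (hglue u w), ind_and]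
                    ring
                _ = ind (¬ hasM g n Δ u) * ∑ w ∈ WS A ((K'+1)*L - 1),
                      tpr Q (u (L-1)) (((K'+1)*L - 1)+1) w * ind (condC g n Δ L (K'+1) w) :=
                    (Finset.mul_sum _ _ _).symm
                _ ≤ ind (¬ hasM g n Δ u) * (1 - q*ε)^(K'+1) := by
                    refine mul_le_mul_of_nonneg_left ?_ (ind_nonneg _)
                    rw [e3]
                    exact ih (u (L-1))
          _ = (∑ u ∈ WS A (L-1), tpr Q x ((L-1)+1) u * ind (¬ hasM g n Δ u)) *
                (1 - q*ε)^(K'+1) := by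
              rw [Finset.sum_mul]
              refine Finset.sum_congr rfl fun u _ => ?_
              ring
          _ ≤ (1 - q*ε) * (1 - q*ε)^(K'+1) :=
              mul_le_mul_of_nonneg_right (honeblock x) (pow_nonneg hqε0 _)
          _ = (1 - q*ε)^(K'+1+1) := by
              rw [pow_succ]
              ring
  -- final assembly
  obtain ⟨K0, rfl⟩ : ∃ K0, K = K0 + 1 := ⟨K-1, by omega⟩
  have hset : {ω : ℕ → A | ∀ j < K0+1, ∀ s, 1 ≤ s → s ≤ Δ+1 →
        ¬ (∀ i < n, ω (j*L + s + 1 + i) = g (i+1))}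
      = {ω : ℕ → A | condC g n Δ L (K0+1) (clampF ((K0+1)*L - 1) (shiftW ω))} := by
    ext ω
    simp only [Set.mem_setOf_eq]
    unfold condC
    refine forall_congr' fun j => imp_congr_right fun hj => forall_congr' fun s =>
      imp_congr_right fun hs1 => imp_congr_right fun hs2 =>
      not_congr (forall_congr' fun i => imp_congr_right fun hi => ?_)
    have hidx : clampF ((K0+1)*L - 1) (shiftW ω) (j*L+s+i) = ω (j*L+s+1+i) := by
      simp only [clampF, shiftW]
      congr 1
      have hjK : j*L ≤ K0*L := Nat.mul_le_mul_right L (by omega)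
      have hsm : (K0+1)*L = K0*L + L := Nat.succ_mul K0 L
      omega
    rw [hidx]
  rw [hset, FDD' Q μ P hP ((K0+1)*L - 1) (condC g n Δ L (K0+1))]
  have hM1 : 1 ≤ (K0+1)*L := Nat.one_le_iff_ne_zero.mpr
    (Nat.mul_ne_zero (Nat.succ_ne_zero K0) (by omega))
  have e4 : ((K0+1)*L - 1) + 1 = (K0+1)*L := by omega
  calc ∑ x : A, μ x * ∑ c ∈ WS A ((K0+1)*L - 1),
        tpr Q x (((K0+1)*L - 1)+1) c * ind (condC g n Δ L (K0+1) c)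
      ≤ ∑ x : A, μ x * (1 - q*ε)^(K0+1) := by
        refine Finset.sum_le_sum fun x _ => ?_
        refine mul_le_mul_of_nonneg_left ?_ (hμ0 x)
        rw [e4]
        exact claim K0 x
    _ = (1 - q*ε)^(K0+1) := by
        rw [← Finset.sum_mul, hμsum, one_mul]

end Stmt15Aux


set_option maxHeartbeats 4000000 in
open Stmt15Aux in
/-- Almost-sure sandwich bounds for `log (T_n(g|ω) · P_n(g_1,…,g_n))`, uniformly in the
target sequence `g`. -/
theorem stmt15
    {A : Type*} [Fintype A] [Nonempty A] [MeasurableSpace A] [MeasurableSingletonClass A]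
    (Q : A → A → ℝ) (μ : A → ℝ)
    (hQpos : ∀ x y, 0 < Q x y)
    (hQrow : ∀ x, ∑ y, Q x y = 1)
    (hμnonneg : ∀ x, 0 ≤ μ x) (hμsum : ∑ x, μ x = 1)
    (hμstat : ∀ y, ∑ x, μ x * Q x y = μ y)
    (P : Measure (ℕ → A)) [IsProbabilityMeasure P]
    (hP : ∀ (n : ℕ) (a : ℕ → A),
      (P {ω | ∀ i ≤ n, ω i = a i}).toReal
        = μ (a 0) * ∏ i ∈ Finset.range n, Q (a i) (a (i + 1))) :
    ∃ κ₁ κ₂ : ℝ, 0 < κ₁ ∧ 0 < κ₂ ∧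
      ∀ g : ℕ → A, ∀ᵐ ω ∂P, ∀ᶠ n : ℕ in atTop,
        -κ₁ * Real.log n ≤ Real.log ((hitTime n g ω : ℝ) * cylProb P n g) ∧
        Real.log ((hitTime n g ω : ℝ) * cylProb P n g) ≤ Real.log (κ₂ * Real.log n) := by
  classical
  have hlogev : ∀ᶠ n : ℕ in atTop, 1 ≤ Real.log n := by
    have ht : Tendsto (fun n : ℕ => Real.log n) atTop atTop :=
      Real.tendsto_log_atTop.comp tendsto_natCast_atTop_atTop
    exact ht.eventually_ge_atTop 1
  rcases subsingleton_or_nontrivial A with hsub | hnt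
  · -- trivial alphabet
    refine ⟨1, 3, one_pos, by norm_num, fun g => MeasureTheory.ae_of_all _ (fun ω => ?_)⟩
    have hT : ∀ n, hitTime n g ω = 0 := by
      intro n
      refine Nat.sInf_eq_zero.mpr (Or.inl ?_)
      intro i _ _
      exact Subsingleton.elim _ _
    filter_upwards [hlogev] with n hn
    rw [hT n]
    simp only [Nat.cast_zero, zero_mul, Real.log_zero]
    constructor
    · nlinarith
    · refine Real.log_nonneg ?_
      nlinarith
  · -- nontrivial alphabet
    obtain ⟨pr, -, hpr⟩ := Finset.exists_min_image (Finset.univ : Finset (A × A))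
      (fun p => Q p.1 p.2) ⟨(Classical.arbitrary A, Classical.arbitrary A), Finset.mem_univ _⟩
    set q : ℝ := Q pr.1 pr.2 with hqdef
    have hq : 0 < q := hQpos _ _
    have hQq : ∀ x y, q ≤ Q x y := fun x y => hpr (x, y) (Finset.mem_univ _)
    have hQ0 : ∀ x y, 0 ≤ Q x y := fun x y => (hQpos x y).le
    have hQ1 : ∀ x y, Q x y ≤ 1 := by
      intro x y
      rw [← hQrow x]
      exact Finset.single_le_sum (fun z _ => hQ0 x z) (Finset.mem_univ y)
    have hμ1 : ∀ x, μ x ≤ 1 := by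
      intro x
      rw [← hμsum]
      exact Finset.single_le_sum (fun z _ => hμnonneg z) (Finset.mem_univ x)
    have hμq : ∀ y, q ≤ μ y := by
      intro y
      rw [← hμstat y]
      calc q = (∑ x, μ x) * q := by rw [hμsum, one_mul]
        _ = ∑ x, μ x * q := by rw [Finset.sum_mul]
        _ ≤ ∑ x, μ x * Q x y :=
            Finset.sum_le_sum fun x _ => mul_le_mul_of_nonneg_left (hQq x y) (hμnonneg x)
    set r : ℝ := 1 - q with hrdef
    have hQr : ∀ x y, Q x y ≤ r := by
      intro x y
      obtain ⟨y', hy'⟩ := exists_ne y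
      have hpair : Q x y + Q x y' ≤ 1 := by
        rw [← hQrow x]
        have h1 : Q x y + Q x y' = ∑ z ∈ ({y, y'} : Finset A), Q x z := by
          rw [Finset.sum_pair (Ne.symm hy')]
        rw [h1]
        refine Finset.sum_le_sum_of_subset_of_nonneg (Finset.subset_univ _) ?_
        intro z _ _
        exact hQ0 x z
      have := hQq x y'
      rw [hrdef]
      linarith
    have hq2 : q ≤ 1/2 := by
      have h1 := hQq pr.1 pr.2
      have h2 := hQr pr.1 pr.2
      rw [hrdef] at h2
      rw [hqdef] at *
      linarith
    have hr0 : 0 ≤ r := by rw [hrdef]; linarith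
    have hr1 : r < 1 := by rw [hrdef]; linarith
    set c : ℝ := q * (q / 30) with hcdef
    have hc : 0 < c := by positivity
    have hc1 : c ≤ 1 := by rw [hcdef]; nlinarith
    refine ⟨2, 2 * (2/c + 1), by norm_num, by positivity, ?_⟩
    intro g
    set pf : ℕ → ℝ := fun n => pn Q μ g n with hpf
    have hppos : ∀ n, 0 < pf n := fun n => pn_pos Q μ hq hQq hμq g n
    have hp1 : ∀ n, pf n ≤ 1 := fun n => pn_le_one Q μ hQ0 hQ1 hμnonneg hμ1 g n
    have hprn : ∀ n, pf n ≤ r ^ (n-1) :=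
      fun n => pn_le_rpow Q μ hr0 hQr hQ0 hμ1 hμnonneg g n
    set Δf : ℕ → ℕ := fun n => ⌈1 / pf n⌉₊ with hΔf
    set Kf : ℕ → ℕ := fun n => ⌈(2/c) * Real.log n⌉₊ with hKf
    have hΔl : ∀ n, 1 / pf n ≤ (Δf n : ℝ) := fun n => Nat.le_ceil _
    have hΔu : ∀ n, (Δf n : ℝ) ≤ 1 / pf n + 1 :=
      fun n => (Nat.ceil_lt_add_one (le_of_lt (div_pos one_pos (hppos n)))).le
    -- the cylinder probability
    have hcyl : ∀ n, 1 ≤ n → cylProb P n g = pf n := by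
      intro n hn
      unfold cylProb
      have hset : {ω : ℕ → A | ∀ i, 1 ≤ i → i ≤ n → ω i = g i} = MatchSet g n 0 := by
        ext ω
        simp only [Set.mem_setOf_eq, MatchSet]
        constructor
        · intro h i hi
          have h2 := h (i+1) (by omega) (by omega)
          rw [show 0+1+i = i+1 from by omega]
          exact h2
        · intro h i h1 h2
          have h3 := h (i-1) (by omega)
          rw [show 0+1+(i-1) = i from by omega, show (i-1)+1 = i from by omega] at h3
          exact h3
      rw [hset]
      exact match_prob Q μ P hP hμstat g n hn 0
    -- bad events
    set B1 : ℕ → Set (ℕ → A) := fun n =>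
      {ω | 1 ≤ hitTime n g ω ∧ (hitTime n g ω : ℝ) * pf n ≤ (((n:ℝ))^2)⁻¹} with hB1def
    set B2 : ℕ → Set (ℕ → A) := fun n =>
      {ω | ∀ j < Kf n, ∀ s, 1 ≤ s → s ≤ Δf n + 1 →
        ¬ (∀ i < n, ω (j*(Δf n + n + 1) + s + 1 + i) = g (i+1))} with hB2def
    -- bound for B1
    have hB1 : ∀ n, 1 ≤ n → P (B1 n) ≤ ENNReal.ofReal ((((n:ℝ))^2)⁻¹) := by
      intro n hn
      have hn0 : (0:ℝ) < (n:ℝ) := by exact_mod_cast hn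
      set t' : ℕ := ⌊(((n:ℝ))^2)⁻¹ / pf n⌋₊ with ht'
      have hsub : B1 n ⊆ ⋃ k ∈ Finset.Icc 1 t', MatchSet g n k := by
        rintro ω ⟨hT1, hTp⟩
        have hS : {k | ∀ i, 1 ≤ i → i ≤ n → ω (k + i) = g i}.Nonempty := by
          by_contra h
          rw [Set.not_nonempty_iff_eq_empty] at h
          have : hitTime n g ω = 0 := by
            unfold hitTime
            rw [h, Nat.sInf_empty]
          omega
        have hTS : hitTime n g ω ∈ {k | ∀ i, 1 ≤ i → i ≤ n → ω (k + i) = g i} :=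
          Nat.sInf_mem hS
        simp only [Set.mem_iUnion, Finset.mem_Icc]
        refine ⟨hitTime n g ω, ⟨hT1, ?_⟩, ?_⟩
        · refine Nat.le_floor ?_
          rw [le_div_iff₀ (hppos n)]
          exact hTp
        · intro i hi
          have h2 := hTS (i+1) (by omega) (by omega)
          rw [show hitTime n g ω + (i+1) = hitTime n g ω + 1 + i from by omega] at h2
          exact h2
      calc P (B1 n) ≤ P (⋃ k ∈ Finset.Icc 1 t', MatchSet g n k) := measure_mono hsub
        _ ≤ ∑ k ∈ Finset.Icc 1 t', P (MatchSet g n k) := measure_biUnion_finset_le _ _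
        _ = ∑ k ∈ Finset.Icc 1 t', ENNReal.ofReal (pf n) := by
            refine Finset.sum_congr rfl fun k _ => ?_
            simp only [hpf]
            rw [← match_prob Q μ P hP hμstat g n hn k,
              ENNReal.ofReal_toReal (measure_ne_top P _)]
        _ = (t' : ENNReal) * ENNReal.ofReal (pf n) := by
            rw [Finset.sum_const, Nat.card_Icc, nsmul_eq_mul]
            norm_num
        _ = ENNReal.ofReal ((t' : ℝ) * pf n) := by
            rw [ENNReal.ofReal_mul (by positivity), ENNReal.ofReal_natCast]
        _ ≤ ENNReal.ofReal ((((n:ℝ))^2)⁻¹) := by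
            refine ENNReal.ofReal_le_ofReal ?_
            have h1 : (t' : ℝ) ≤ (((n:ℝ))^2)⁻¹ / pf n :=
              Nat.floor_le (le_of_lt (div_pos (inv_pos.mpr (pow_pos hn0 2)) (hppos n)))
            have h2 : (t' : ℝ) * pf n ≤ ((((n:ℝ))^2)⁻¹ / pf n) * pf n :=
              mul_le_mul_of_nonneg_right h1 (hppos n).le
            rwa [div_mul_cancel₀ _ (hppos n).ne'] at h2
    -- bound for B2
    have hB2 : ∀ n, 2 ≤ n → P (B2 n) ≤ ENNReal.ofReal ((((n:ℝ))^2)⁻¹) := by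
      intro n hn2
      have hn1 : 1 ≤ n := by omega
      have hn0 : (0:ℝ) < (n:ℝ) := by exact_mod_cast hn1
      have hlogn : 0 < Real.log n := Real.log_pos (by exact_mod_cast hn2)
      have hK1 : 1 ≤ Kf n := Nat.one_le_ceil_iff.mpr (by positivity)
      have hblock := blockavoid Q μ P hP hμstat hQrow hμsum hQ0 hQ1 hμnonneg hμ1
        hq hq2 hQq hμq hr0 hrdef hQr g n hn1 (Δf n) (hΔl n) (hΔu n) (Kf n) hK1
      have hBeq : P (B2 n) = ENNReal.ofReal ((P (B2 n)).toReal) :=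
        (ENNReal.ofReal_toReal (measure_ne_top P _)).symm
      rw [hBeq]
      refine ENNReal.ofReal_le_ofReal ?_
      have hstep : (P (B2 n)).toReal ≤ (1 - c)^(Kf n) := hblock
      refine hstep.trans ?_
      have h1 : 1 - c ≤ Real.exp (-c) := by
        have := Real.add_one_le_exp (-c)
        linarith
      have h2 : (1-c)^(Kf n) ≤ Real.exp (-c)^(Kf n) :=
        pow_le_pow_left₀ (by linarith) h1 _
      have h3 : Real.exp (-c)^(Kf n) = Real.exp ((Kf n : ℝ) * (-c)) :=
        (Real.exp_nat_mul _ _).symm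
      have h4 : (2/c) * Real.log n ≤ (Kf n : ℝ) := Nat.le_ceil _
      have h5 : (Kf n : ℝ) * (-c) ≤ -(2 * Real.log n) := by
        have hcc : (2/c) * c = 2 := div_mul_cancel₀ 2 hc.ne'
        nlinarith [mul_le_mul_of_nonneg_right h4 hc.le]
      have h6 : Real.exp ((Kf n:ℝ)*(-c)) ≤ Real.exp (-(2*Real.log n)) :=
        Real.exp_le_exp.mpr h5
      have h7 : Real.exp (-(2*Real.log n)) = (((n:ℝ))^2)⁻¹ := by
        rw [Real.exp_neg]
        congr 1
        rw [show (2:ℝ) * Real.log n = ((2:ℕ):ℝ) * Real.log n from by norm_num,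
          Real.exp_nat_mul, Real.exp_log hn0]
      calc (1-c)^(Kf n) ≤ Real.exp (-c)^(Kf n) := h2
        _ = Real.exp ((Kf n : ℝ) * (-c)) := h3
        _ ≤ Real.exp (-(2*Real.log n)) := h6
        _ = (((n:ℝ))^2)⁻¹ := h7
    -- summability
    have hsummable : Summable (fun m : ℕ => ((((m+1:ℕ)):ℝ)^2)⁻¹) := by
      have h0 : Summable (fun m : ℕ => 1/((m:ℝ))^2) :=
        summable_one_div_nat_pow.mpr (by norm_num)
      have h1 := (summable_nat_add_iff 1).mpr h0
      refine h1.congr fun m => ?_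
      push_cast
      rw [one_div]
    have htsum1 : ∑' m : ℕ, P (B1 (m+1)) ≠ ⊤ := by
      have hle : ∀ m : ℕ, P (B1 (m+1)) ≤ ENNReal.ofReal (((((m+1:ℕ)):ℝ))^2)⁻¹ :=
        fun m => hB1 (m+1) (by omega)
      refine ne_top_of_le_ne_top ?_ (ENNReal.tsum_le_tsum hle)
      rw [← ENNReal.ofReal_tsum_of_nonneg (fun m => by positivity) hsummable]
      exact ENNReal.ofReal_ne_top
    have htsum2 : ∑' m : ℕ, P (B2 (m+2)) ≠ ⊤ := by
      have hle : ∀ m : ℕ, P (B2 (m+2)) ≤ ENNReal.ofReal (((((m+2:ℕ)):ℝ))^2)⁻¹ :=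
        fun m => hB2 (m+2) (by omega)
      refine ne_top_of_le_ne_top ?_ (ENNReal.tsum_le_tsum hle)
      have hsummable2 : Summable (fun m : ℕ => ((((m+2:ℕ)):ℝ)^2)⁻¹) := by
        have h0 : Summable (fun m : ℕ => 1/((m:ℝ))^2) :=
          summable_one_div_nat_pow.mpr (by norm_num)
        have h1 := (summable_nat_add_iff 2).mpr h0
        refine h1.congr fun m => ?_
        push_cast
        rw [one_div]
      rw [← ENNReal.ofReal_tsum_of_nonneg (fun m => by positivity) hsummable2]
      exact ENNReal.ofReal_ne_top
    have hae1 := MeasureTheory.ae_eventually_notMem htsum1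
    have hae2 := MeasureTheory.ae_eventually_notMem htsum2
    -- deterministic eventual bound : (n+2) * r^(n-1) ≤ 1
    have hev1 : ∀ᶠ n : ℕ in atTop, ((n:ℝ)+2) * r^(n-1) ≤ 1 := by
      have ht1 : Tendsto (fun m : ℕ => ((m:ℝ)+3) * r^m) atTop (nhds 0) := by
        have ha : Summable (fun m : ℕ => ((m:ℝ))^1 * r^m) :=
          summable_pow_mul_geometric_of_norm_lt_one 1 (by
            rw [Real.norm_eq_abs, abs_of_nonneg hr0]; exact hr1)
        have hb : Tendsto (fun m : ℕ => ((m:ℝ))^1 * r^m) atTop (nhds 0) :=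
          ha.tendsto_atTop_zero
        have hcg : Tendsto (fun m : ℕ => r^m) atTop (nhds 0) :=
          tendsto_pow_atTop_nhds_zero_of_lt_one hr0 hr1
        have := hb.add (hcg.const_mul 3)
        simp only [add_zero, mul_zero] at this
        refine Tendsto.congr (fun m => ?_) this
        ring
      have ht2 : Tendsto (fun n : ℕ => ((((n-1):ℕ):ℝ)+3) * r^(n-1)) atTop (nhds 0) :=
        ht1.comp (tendsto_sub_atTop_nat 1)
      have ht3 : ∀ᶠ n : ℕ in atTop, ((((n-1):ℕ):ℝ)+3) * r^(n-1) < 1 :=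
        ht2.eventually_lt_const one_pos
      filter_upwards [ht3, eventually_ge_atTop 1] with n h1 hn1
      have hc1 : (((n-1:ℕ)):ℝ) = (n:ℝ) - 1 := by
        rw [Nat.cast_sub hn1]
        norm_num
      rw [hc1] at h1
      have he : (n:ℝ) - 1 + 3 = (n:ℝ) + 2 := by ring
      rw [he] at h1
      linarith
    -- eventual lower bound for κ₂ log n
    have hκev : ∀ᶠ n : ℕ in atTop, 1 ≤ 2*(2/c+1) * Real.log n := by
      filter_upwards [hlogev] with n hn
      have hpos : (0:ℝ) < 2/c := by positivity
      nlinarith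
    -- combine everything
    filter_upwards [hae1, hae2] with ω h1 h2
    obtain ⟨N1, hN1⟩ := Filter.eventually_atTop.mp h1
    obtain ⟨N2, hN2⟩ := Filter.eventually_atTop.mp h2
    have hgood1 : ∀ n, N1+1 ≤ n → ω ∉ B1 n := by
      intro n hn
      have h3 := hN1 (n-1) (by omega)
      rwa [show n-1+1 = n from by omega] at h3
    have hgood2 : ∀ n, N2+2 ≤ n → ω ∉ B2 n := by
      intro n hn
      have h3 := hN2 (n-2) (by omega)
      rwa [show n-2+2 = n from by omega] at h3
    filter_upwards [eventually_ge_atTop (N1+1), eventually_ge_atTop (N2+2),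
      eventually_ge_atTop 1, hev1, hlogev, hκev] with n hn1 hn2 hnn hev hlog hκ
    have hn0 : (0:ℝ) < n := by exact_mod_cast hnn
    rw [hcyl n hnn]
    set T : ℕ := hitTime n g ω with hT
    constructor
    · -- lower bound
      by_cases hT0 : T = 0
      · rw [hT0]
        simp only [Nat.cast_zero, zero_mul, Real.log_zero]
        nlinarith
      · have hT1 : 1 ≤ T := by omega
        have hnb : ω ∉ B1 n := hgood1 n hn1
        have hgt : (((n:ℝ))^2)⁻¹ < (T:ℝ) * pf n := by
          by_contra hcon
          push_neg at hcon
          exact hnb ⟨hT1, hcon⟩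
        have hlog2 := Real.log_le_log (by positivity) hgt.le
        rw [Real.log_inv, Real.log_pow] at hlog2
        push_cast at hlog2
        linarith
    · -- upper bound
      have hnb2 : ω ∉ B2 n := hgood2 n hn2
      have hcon2 : ¬ (∀ j < Kf n, ∀ s, 1 ≤ s → s ≤ Δf n + 1 →
          ¬ (∀ i < n, ω (j*(Δf n + n + 1) + s + 1 + i) = g (i+1))) := hnb2
      push_neg at hcon2
      obtain ⟨j, hj, s, hs1, hs2, hsm⟩ := hcon2
      set L : ℕ := Δf n + n + 1 with hLdef2
      have hmem : (j*L + s) ∈ {k | ∀ i, 1 ≤ i → i ≤ n → ω (k + i) = g i} := by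
        intro i hi1 hi2
        have h3 := hsm (i-1) (by omega)
        rw [show j*L + s + 1 + (i-1) = j*L + s + i from by omega,
          show (i-1)+1 = i from by omega] at h3
        exact h3
      have hTle : T ≤ j*L + s := Nat.sInf_le hmem
      have hjL : j*L + s ≤ Kf n * L := by
        calc j*L + s ≤ j*L + L := by omega
          _ = (j+1)*L := (Nat.succ_mul j L).symm
          _ ≤ Kf n * L := Nat.mul_le_mul_right L (by omega)
      have hTKL : (T:ℝ) ≤ (Kf n : ℝ) * (L:ℝ) := by
        have h4 : T ≤ Kf n * L := hTle.trans hjL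
        exact_mod_cast h4
      have hLp : (L:ℝ) * pf n ≤ 2 := by
        have hΔ : (Δf n : ℝ) ≤ 1/(pf n) + 1 := hΔu n
        have hLcast : (L:ℝ) = (Δf n : ℝ) + n + 1 := by
          rw [hLdef2]
          push_cast
          ring
        have hp := hppos n
        have hnp : ((n:ℝ)+2) * pf n ≤ 1 := by
          calc ((n:ℝ)+2) * pf n ≤ ((n:ℝ)+2) * r^(n-1) :=
                mul_le_mul_of_nonneg_left (hprn n) (by positivity)
            _ ≤ 1 := hev
        calc (L:ℝ) * pf n = ((Δf n : ℝ) + n + 1) * pf n := by rw [hLcast]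
          _ ≤ (1/(pf n) + 1 + n + 1) * pf n := by
              refine mul_le_mul_of_nonneg_right (by linarith) hp.le
          _ = 1 + ((n:ℝ)+2) * pf n := by
              field_simp
              ring
          _ ≤ 2 := by linarith
      have hKle : (Kf n : ℝ) ≤ (2/c + 1) * Real.log n := by
        have h5 : (Kf n : ℝ) < (2/c) * Real.log n + 1 := Nat.ceil_lt_add_one (by positivity)
        nlinarith
      have hTp : (T:ℝ) * pf n ≤ 2*(2/c+1) * Real.log n := by
        calc (T:ℝ) * pf n ≤ ((Kf n:ℝ) * (L:ℝ)) * pf n :=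
              mul_le_mul_of_nonneg_right hTKL (hppos n).le
          _ = (Kf n:ℝ) * ((L:ℝ) * pf n) := by ring
          _ ≤ ((2/c+1) * Real.log n) * 2 := by
              refine mul_le_mul hKle hLp
                (mul_nonneg (by positivity) (hppos n).le)
                (mul_nonneg (by positivity) (by linarith))
          _ = 2*(2/c+1) * Real.log n := by ring
      by_cases hT0 : T = 0
      · rw [hT0]
        simp only [Nat.cast_zero, zero_mul, Real.log_zero]
        exact Real.log_nonneg hκ
      · have hT1 : (1:ℝ) ≤ (T:ℝ) := by
          exact_mod_cast Nat.one_le_iff_ne_zero.mpr hT0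
        refine Real.log_le_log ?_ hTp
        exact mul_pos (by linarith) (hppos n)
end
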